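/- arXiv:2509.12218 — 2 statements merged into one kernel-verified Lean document; each statement's English description precedes it below -/
import Mathlib

section
/- For 0 < α < 1, g strictly increasing with continuous nonvanishing derivative on [a, b], and f continuously differentiable, consider the parametric GFD with power kernel K(x) = x^(-α)/Γ(1-α); then for each fixed x in (a, b) the RL-type parametric fractional derivative (D_{a+,g}^{(h_{1-α})} f)(x) tends to f'(x)/g'(x) as α → 1⁻. -/
open Set intervalIntegral Real Filter MeasureTheory Topology


/-- elementary evaluation: `∫ u in v..r, (r-u)^(β-1) = (r-v)^β / β` -/
lemma prfd_rpow_integral {β : ℝ} (hβ0 : 0 < β) (v r : ℝ) (hvr : v ≤ r) :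
    ∫ u in v..r, (r - u) ^ (β - 1) = (r - v) ^ β / β := by
  have h1 : (∫ u in v..r, (fun t : ℝ => t ^ (β - 1)) (r - u))
      = ∫ t in (r - r)..(r - v), t ^ (β - 1) :=
    intervalIntegral.integral_comp_sub_left (fun t : ℝ => t ^ (β - 1)) r
  simp only [sub_self] at h1
  rw [show (fun u : ℝ => (r - u) ^ (β - 1)) = fun u : ℝ => (fun t : ℝ => t ^ (β-1)) (r - u) from rfl] at *
  rw [h1, integral_rpow (Or.inl (by linarith))]
  rw [Real.zero_rpow (by linarith : β - 1 + 1 ≠ 0)]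
  norm_num

/-- integrability of the kernel singular at the right endpoint -/
lemma prfd_integrable_right {β m : ℝ} (hβ0 : 0 < β) (hβ1 : β < 1) (hm : 0 < m)
    {g h : ℝ → ℝ} {v r : ℝ} (hvr : v ≤ r)
    (hgc : ContinuousOn g (Icc v r)) (hh : ContinuousOn h (Icc v r))
    (hlow : ∀ u ∈ Icc v r, m * (r - u) ≤ g r - g u) :
    IntervalIntegrable (fun u => (g r - g u) ^ (β - 1) * h u) volume v r := by
  rcases eq_or_lt_of_le hvr with rfl | hlt
  · exact IntervalIntegrable.refl
  obtain ⟨C, hC⟩ := isCompact_Icc.exists_bound_of_continuousOn hh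
  rw [intervalIntegrable_iff_integrableOn_Ioc_of_le hvr]
  have hbnd : IntegrableOn (fun u => m ^ (β - 1) * C * (r - u) ^ (β - 1)) (Ioc v r) volume := by
    have h1 : IntervalIntegrable (fun t : ℝ => t ^ (β - 1)) volume 0 (r - v) :=
      intervalIntegral.intervalIntegrable_rpow' (by linarith)
    have h2 := ((h1.comp_sub_left r).const_mul (m ^ (β - 1) * C)).symm
    rw [sub_sub_cancel, sub_zero] at h2
    exact (intervalIntegrable_iff_integrableOn_Ioc_of_le hvr).mp h2
  have hmeas : AEStronglyMeasurable (fun u => (g r - g u) ^ (β - 1) * h u)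
      (volume.restrict (Ioc v r)) := by
    rw [← Measure.restrict_congr_set Ioo_ae_eq_Ioc]
    refine ContinuousOn.aestronglyMeasurable ?_ measurableSet_Ioo
    refine ContinuousOn.mul ?_ (hh.mono Ioo_subset_Icc_self)
    refine ContinuousOn.rpow_const (continuousOn_const.sub (hgc.mono Ioo_subset_Icc_self)) ?_
    intro u hu
    left
    have h0 : 0 < m * (r - u) := by
      have := hu.2
      nlinarith [hu.2]
    exact (lt_of_lt_of_le h0 (hlow u ⟨hu.1.le, hu.2.le⟩)).ne'
  refine Integrable.mono' hbnd hmeas ?_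
  filter_upwards [ae_restrict_mem measurableSet_Ioc] with u hu
  rcases eq_or_lt_of_le hu.2 with rfl | hur
  · rw [sub_self, sub_self, Real.zero_rpow (by linarith : β - 1 ≠ 0)]
    simp
  · have hru : 0 < r - u := sub_pos.mpr hur
    have h0 : 0 < m * (r - u) := mul_pos hm hru
    have h1 : 0 < g r - g u := lt_of_lt_of_le h0 (hlow u ⟨hu.1.le, hu.2⟩)
    have hker : (g r - g u) ^ (β - 1) ≤ (m * (r - u)) ^ (β - 1) :=
      Real.rpow_le_rpow_of_nonpos h0 (hlow u ⟨hu.1.le, hu.2⟩) (by linarith)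
    have hCu : |h u| ≤ C := by
      have := hC u ⟨hu.1.le, hu.2⟩
      simpa [Real.norm_eq_abs] using this
    have hC0 : 0 ≤ C := le_trans (abs_nonneg _) hCu
    calc ‖(g r - g u) ^ (β - 1) * h u‖
        = (g r - g u) ^ (β - 1) * |h u| := by
          rw [Real.norm_eq_abs, abs_mul, abs_of_nonneg (Real.rpow_nonneg h1.le _)]
      _ ≤ (m * (r - u)) ^ (β - 1) * C :=
          mul_le_mul hker hCu (abs_nonneg _) (Real.rpow_nonneg h0.le _)
      _ = m ^ (β - 1) * C * (r - u) ^ (β - 1) := by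
          rw [Real.mul_rpow hm.le hru.le]; ring

/-- integrability of the kernel singular at the left endpoint -/
lemma prfd_integrable_left {β m : ℝ} (hβ0 : 0 < β) (hβ1 : β < 1) (hm : 0 < m)
    {g h : ℝ → ℝ} {u y : ℝ} (huy : u ≤ y)
    (hgc : ContinuousOn g (Icc u y)) (hh : ContinuousOn h (Icc u y))
    (hlow : ∀ r ∈ Icc u y, m * (r - u) ≤ g r - g u) :
    IntervalIntegrable (fun r => (g r - g u) ^ (β - 1) * h r) volume u y := by
  rcases eq_or_lt_of_le huy with rfl | hlt
  · exact IntervalIntegrable.refl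
  obtain ⟨C, hC⟩ := isCompact_Icc.exists_bound_of_continuousOn hh
  rw [intervalIntegrable_iff_integrableOn_Ioc_of_le huy]
  have hbnd : IntegrableOn (fun r => m ^ (β - 1) * C * (r - u) ^ (β - 1)) (Ioc u y) volume := by
    have h1 : IntervalIntegrable (fun t : ℝ => t ^ (β - 1)) volume 0 (y - u) :=
      intervalIntegral.intervalIntegrable_rpow' (by linarith)
    have h2 := (h1.comp_sub_right u).const_mul (m ^ (β - 1) * C)
    rw [zero_add, sub_add_cancel] at h2
    exact (intervalIntegrable_iff_integrableOn_Ioc_of_le huy).mp h2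
  have hmeas : AEStronglyMeasurable (fun r => (g r - g u) ^ (β - 1) * h r)
      (volume.restrict (Ioc u y)) := by
    refine ContinuousOn.aestronglyMeasurable ?_ measurableSet_Ioc
    refine ContinuousOn.mul ?_ (hh.mono Ioc_subset_Icc_self)
    refine ContinuousOn.rpow_const ((hgc.mono Ioc_subset_Icc_self).sub continuousOn_const) ?_
    intro r hr
    left
    have h0 : 0 < m * (r - u) := by nlinarith [hr.1]
    exact (lt_of_lt_of_le h0 (hlow r ⟨hr.1.le, hr.2⟩)).ne'
  refine Integrable.mono' hbnd hmeas ?_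
  filter_upwards [ae_restrict_mem measurableSet_Ioc] with r hr
  have hru : 0 < r - u := sub_pos.mpr hr.1
  have h0 : 0 < m * (r - u) := mul_pos hm hru
  have h1 : 0 < g r - g u := lt_of_lt_of_le h0 (hlow r ⟨hr.1.le, hr.2⟩)
  have hker : (g r - g u) ^ (β - 1) ≤ (m * (r - u)) ^ (β - 1) :=
    Real.rpow_le_rpow_of_nonpos h0 (hlow r ⟨hr.1.le, hr.2⟩) (by linarith)
  have hCu : |h r| ≤ C := by
    have := hC r ⟨hr.1.le, hr.2⟩
    simpa [Real.norm_eq_abs] using this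
  calc ‖(g r - g u) ^ (β - 1) * h r‖
      = (g r - g u) ^ (β - 1) * |h r| := by
        rw [Real.norm_eq_abs, abs_mul, abs_of_nonneg (Real.rpow_nonneg h1.le _)]
    _ ≤ (m * (r - u)) ^ (β - 1) * C :=
        mul_le_mul hker hCu (abs_nonneg _) (Real.rpow_nonneg h0.le _)
    _ = m ^ (β - 1) * C * (r - u) ^ (β - 1) := by
        rw [Real.mul_rpow hm.le hru.le]; ring

lemma prfd_cont_rpow {β : ℝ} (hβ0 : 0 < β) : Continuous (fun t : ℝ => t ^ β) :=
  continuous_iff_continuousAt.mpr fun t => Real.continuousAt_rpow_const t β (Or.inr hβ0.le)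

/-- FTC: `∫ u in v..y, (g y - g u)^(β-1) * g' u = (g y - g v)^β / β` -/
lemma prfd_ftc_right {β m : ℝ} (hβ0 : 0 < β) (hβ1 : β < 1) (hm : 0 < m)
    {g : ℝ → ℝ} {v y : ℝ} (hvy : v ≤ y)
    (hgc : ContinuousOn g (Icc v y)) (hgd : ∀ u ∈ Icc v y, HasDerivAt g (deriv g u) u)
    (hg'c : ContinuousOn (deriv g) (Icc v y))
    (hlow : ∀ u ∈ Icc v y, m * (y - u) ≤ g y - g u) :
    ∫ u in v..y, (g y - g u) ^ (β - 1) * deriv g u = (g y - g v) ^ β / β := by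
  rcases eq_or_lt_of_le hvy with rfl | hlt
  · simp [Real.zero_rpow hβ0.ne']
  have hW : ∀ u ∈ Ioo v y, HasDerivWithinAt (fun w => -((g y - g w) ^ β / β))
      ((g y - g u) ^ (β - 1) * deriv g u) (Ioi u) u := by
    intro u hu
    have hru : 0 < y - u := sub_pos.mpr hu.2
    have h0 : 0 < g y - g u := lt_of_lt_of_le (mul_pos hm hru) (hlow u ⟨hu.1.le, hu.2.le⟩)
    have h1 : HasDerivAt (fun w => g y - g w) (-(deriv g u)) u := by
      exact (hgd u ⟨hu.1.le, hu.2.le⟩).const_sub (g y)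
    have h2 := (Real.hasDerivAt_rpow_const (x := g y - g u) (p := β) (Or.inl h0.ne')).comp u h1
    have h3 := (h2.div_const β).neg
    have : -(β * (g y - g u) ^ (β - 1) * -deriv g u / β) = (g y - g u) ^ (β - 1) * deriv g u := by
      field_simp
    rw [this] at h3
    exact h3.hasDerivWithinAt
  have hcont : ContinuousOn (fun w => -((g y - g w) ^ β / β)) (Icc v y) :=
    ((((prfd_cont_rpow hβ0).comp_continuousOn (continuousOn_const.sub hgc))).div_const β).neg
  have hint : IntervalIntegrable (fun u => (g y - g u) ^ (β - 1) * deriv g u) volume v y :=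
    prfd_integrable_right hβ0 hβ1 hm hvy hgc hg'c hlow
  have := intervalIntegral.integral_eq_sub_of_hasDeriv_right_of_le hvy hcont hW hint
  rw [this, sub_self, Real.zero_rpow hβ0.ne']
  ring

/-- FTC: `∫ r in u..y, (g r - g u)^(β-1) * g' r = (g y - g u)^β / β` -/
lemma prfd_ftc_left {β m : ℝ} (hβ0 : 0 < β) (hβ1 : β < 1) (hm : 0 < m)
    {g : ℝ → ℝ} {u y : ℝ} (huy : u ≤ y)
    (hgc : ContinuousOn g (Icc u y)) (hgd : ∀ r ∈ Icc u y, HasDerivAt g (deriv g r) r)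
    (hg'c : ContinuousOn (deriv g) (Icc u y))
    (hlow : ∀ r ∈ Icc u y, m * (r - u) ≤ g r - g u) :
    ∫ r in u..y, (g r - g u) ^ (β - 1) * deriv g r = (g y - g u) ^ β / β := by
  rcases eq_or_lt_of_le huy with rfl | hlt
  · simp [Real.zero_rpow hβ0.ne']
  have hW : ∀ r ∈ Ioo u y, HasDerivWithinAt (fun w => (g w - g u) ^ β / β)
      ((g r - g u) ^ (β - 1) * deriv g r) (Ioi r) r := by
    intro r hr
    have hru : 0 < r - u := sub_pos.mpr hr.1
    have h0 : 0 < g r - g u := lt_of_lt_of_le (mul_pos hm hru) (hlow r ⟨hr.1.le, hr.2.le⟩)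
    have h1 : HasDerivAt (fun w => g w - g u) (deriv g r) r :=
      (hgd r ⟨hr.1.le, hr.2.le⟩).sub_const (g u)
    have h2 := (Real.hasDerivAt_rpow_const (x := g r - g u) (p := β) (Or.inl h0.ne')).comp r h1
    have h3 := h2.div_const β
    have : β * (g r - g u) ^ (β - 1) * deriv g r / β = (g r - g u) ^ (β - 1) * deriv g r := by
      field_simp
    rw [this] at h3
    exact h3.hasDerivWithinAt
  have hcont : ContinuousOn (fun w => (g w - g u) ^ β / β) (Icc u y) :=
    ((prfd_cont_rpow hβ0).comp_continuousOn (hgc.sub continuousOn_const)).div_const β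
  have hint : IntervalIntegrable (fun r => (g r - g u) ^ (β - 1) * deriv g r) volume u y :=
    prfd_integrable_left hβ0 hβ1 hm huy hgc hg'c hlow
  have := intervalIntegral.integral_eq_sub_of_hasDeriv_right_of_le huy hcont hW hint
  rw [this, sub_self, Real.zero_rpow hβ0.ne']
  ring

/-- deriv nonneg of a strictly monotone function on Icc -/
lemma prfd_deriv_pos {a b : ℝ} (hab : a < b) {g : ℝ → ℝ} (hg : StrictMonoOn g (Icc a b))
    (hgd : ∀ u ∈ Icc a b, HasDerivAt g (deriv g u) u)
    (hg0 : ∀ u ∈ Icc a b, deriv g u ≠ 0) :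
    ∀ u ∈ Icc a b, 0 < deriv g u := by
  intro u hu
  have hnn : 0 ≤ deriv g u := by
    have hslope := hasDerivAt_iff_tendsto_slope.mp (hgd u hu)
    rcases lt_or_eq_of_le hu.2 with hub | hub
    · have h1 : Tendsto (slope g u) (𝓝[>] u) (𝓝 (deriv g u)) :=
        hslope.mono_left (nhdsWithin_mono u (fun v hv => ne_of_gt hv))
      refine ge_of_tendsto h1 ?_
      filter_upwards [Ioo_mem_nhdsGT_of_mem (⟨le_rfl, hub⟩ : u ∈ Ico u b)] with v hv
      rw [slope_def_field]
      have : g u < g v := hg hu ⟨le_trans hu.1 hv.1.le, hv.2.le⟩ hv.1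
      have h2 : 0 < v - u := sub_pos.mpr hv.1
      exact le_of_lt (div_pos (sub_pos.mpr this) h2)
    · have hua : a < u := hub ▸ hab
      have h1 : Tendsto (slope g u) (𝓝[<] u) (𝓝 (deriv g u)) :=
        hslope.mono_left (nhdsWithin_mono u (fun v hv => ne_of_lt hv))
      refine ge_of_tendsto h1 ?_
      filter_upwards [Ioo_mem_nhdsLT_of_mem (⟨hua, le_rfl⟩ : u ∈ Ioc a u)] with v hv
      rw [slope_def_field]
      have : g v < g u := hg ⟨hv.1.le, le_trans hv.2.le hu.2⟩ hu hv.2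
      have h2 : v - u < 0 := sub_neg.mpr hv.2
      have h3 : g v - g u < 0 := sub_neg.mpr this
      exact le_of_lt (div_pos_of_neg_of_neg h3 h2)
  exact lt_of_le_of_ne hnn (Ne.symm (hg0 u hu))

/-- two-sided slope bounds from bounds on the derivative -/
lemma prfd_slope_bounds {a b m L : ℝ} {g : ℝ → ℝ}
    (hgc : ContinuousOn g (Icc a b))
    (hgd : ∀ u ∈ Icc a b, HasDerivAt g (deriv g u) u)
    (hmL : ∀ u ∈ Icc a b, m ≤ deriv g u ∧ deriv g u ≤ L) :
    ∀ u ∈ Icc a b, ∀ v ∈ Icc a b, u ≤ v →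
      m * (v - u) ≤ g v - g u ∧ g v - g u ≤ L * (v - u) := by
  intro u hu v hv huv
  rcases eq_or_lt_of_le huv with rfl | hlt
  · simp
  obtain ⟨c, hc, hceq⟩ := exists_hasDerivAt_eq_slope g (deriv g) hlt
    (hgc.mono (Icc_subset_Icc hu.1 hv.2))
    (fun w hw => hgd w ⟨le_trans hu.1 hw.1.le, le_trans hw.2.le hv.2⟩)
  have hcmem : c ∈ Icc a b := ⟨le_trans hu.1 hc.1.le, le_trans hc.2.le hv.2⟩
  have h1 := (hmL c hcmem).1
  have h2 := (hmL c hcmem).2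
  rw [hceq] at h1 h2
  have hvu : 0 < v - u := sub_pos.mpr hlt
  constructor
  · calc m * (v - u) ≤ ((g v - g u) / (v - u)) * (v - u) := by
          exact mul_le_mul_of_nonneg_right h1 hvu.le
      _ = g v - g u := by field_simp
  · calc g v - g u = ((g v - g u) / (v - u)) * (v - u) := by field_simp
      _ ≤ L * (v - u) := mul_le_mul_of_nonneg_right h2 hvu.le

/-- integration by parts representation -/
lemma prfd_parts {β m : ℝ} (hβ0 : 0 < β) (hβ1 : β < 1) (hm : 0 < m)
    {a b y : ℝ} (hab : a < b) (hy : y ∈ Ioc a b)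
    {g f f' : ℝ → ℝ}
    (hgc : ContinuousOn g (Icc a b)) (hgd : ∀ u ∈ Icc a b, HasDerivAt g (deriv g u) u)
    (hg'c : ContinuousOn (deriv g) (Icc a b))
    (hlow : ∀ u ∈ Icc a b, ∀ v ∈ Icc a b, u ≤ v → m * (v - u) ≤ g v - g u)
    (hfc : ContinuousOn f (Icc a b)) (hfd : ∀ u ∈ Ioo a b, HasDerivAt f (f' u) u)
    (hf'c : ContinuousOn f' (Icc a b)) :
    ∫ u in a..y, (g y - g u) ^ (β - 1) * f u * deriv g u
      = f a * ((g y - g a) ^ β / β) + (1/β) * ∫ u in a..y, (g y - g u) ^ β * f' u := by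
  have hay : a ≤ y := hy.1.le
  have hIccsub : Icc a y ⊆ Icc a b := Icc_subset_Icc le_rfl hy.2
  have hymem : y ∈ Icc a b := ⟨hay, hy.2⟩
  have hamem : a ∈ Icc a b := ⟨le_rfl, hab.le⟩
  have hlowy : ∀ u ∈ Icc a y, m * (y - u) ≤ g y - g u :=
    fun u hu => hlow u (hIccsub hu) y hymem hu.2
  -- integrability of both pieces
  have hI1 : IntervalIntegrable (fun u => (g y - g u) ^ (β - 1) * (f u * deriv g u)) volume a y :=
    prfd_integrable_right hβ0 hβ1 hm hay (hgc.mono hIccsub)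
      ((hfc.mono hIccsub).mul (hg'c.mono hIccsub)) hlowy
  have hpowc : ContinuousOn (fun u => (g y - g u) ^ β) (Icc a y) :=
    (prfd_cont_rpow hβ0).comp_continuousOn (continuousOn_const.sub (hgc.mono hIccsub))
  have hI2 : IntervalIntegrable (fun u => (g y - g u) ^ β * f' u) volume a y :=
    (hpowc.mul (hf'c.mono hIccsub)).intervalIntegrable_of_Icc hay
  -- FTC for the product
  have hW : ∀ u ∈ Ioo a y, HasDerivWithinAt (fun w => -(f w * ((g y - g w) ^ β / β)))
      ((g y - g u) ^ (β - 1) * (f u * deriv g u) - (g y - g u) ^ β * f' u / β) (Ioi u) u := by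
    intro u hu
    have humem : u ∈ Ioo a b := ⟨hu.1, lt_of_lt_of_le hu.2 hy.2⟩
    have h0 : 0 < g y - g u :=
      lt_of_lt_of_le (mul_pos hm (sub_pos.mpr hu.2))
        (hlow u ⟨hu.1.le, humem.2.le⟩ y hymem hu.2.le)
    have h1 : HasDerivAt (fun w => g y - g w) (-(deriv g u)) u := by
      exact (hgd u ⟨hu.1.le, humem.2.le⟩).const_sub (g y)
    have h2 := (Real.hasDerivAt_rpow_const (x := g y - g u) (p := β) (Or.inl h0.ne')).comp u h1
    have h3 := ((hfd u humem).mul (h2.div_const β)).neg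
    have heq : -(f' u * ((g y - g u) ^ β / β) + f u * (β * (g y - g u) ^ (β - 1) * -deriv g u / β))
        = (g y - g u) ^ (β - 1) * (f u * deriv g u) - (g y - g u) ^ β * f' u / β := by
      field_simp
      ring
    simp only [Function.comp_apply] at h3
    rw [heq] at h3
    exact h3.hasDerivWithinAt
  have hcont : ContinuousOn (fun w => -(f w * ((g y - g w) ^ β / β))) (Icc a y) :=
    ((hfc.mono hIccsub).mul (hpowc.div_const β)).neg
  have hftc := intervalIntegral.integral_eq_sub_of_hasDeriv_right_of_le hay hcont hW
    (hI1.sub (hI2.div_const β))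
  rw [intervalIntegral.integral_sub hI1 (hI2.div_const β)] at hftc
  rw [sub_self, Real.zero_rpow hβ0.ne'] at hftc
  rw [intervalIntegral.integral_div] at hftc
  have hgoal : (∫ u in a..y, (g y - g u) ^ (β - 1) * f u * deriv g u)
      = ∫ u in a..y, (g y - g u) ^ (β - 1) * (f u * deriv g u) := by
    apply intervalIntegral.integral_congr
    intro u _
    ring
  rw [hgoal]
  have h5 : (∫ u in a..y, (g y - g u) ^ (β - 1) * (f u * deriv g u))
      = ((∫ u in a..y, (g y - g u) ^ (β - 1) * (f u * deriv g u))
        - (∫ u in a..y, (g y - g u) ^ β * f' u) / β)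
        + (1/β) * ∫ u in a..y, (g y - g u) ^ β * f' u := by ring
  rw [h5, hftc]
  ring

lemma prfd_rpow_le_max {t c β : ℝ} (ht : 0 ≤ t) (htc : t ≤ c) (hβ0 : 0 < β) (hβ1 : β ≤ 1) :
    t ^ β ≤ max 1 c := by
  rcases le_or_gt t 1 with h | h
  · exact le_trans (Real.rpow_le_one ht h hβ0.le) (le_max_left _ _)
  · calc t ^ β ≤ t ^ (1:ℝ) := Real.rpow_le_rpow_of_exponent_le h.le hβ1
      _ = t := Real.rpow_one t
      _ ≤ max 1 c := le_trans htc (le_max_right _ _)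

lemma prfd_fubini {β m : ℝ} (hβ0 : 0 < β) (hβ1 : β < 1) (hm : 0 < m)
    {a b y : ℝ} (hab : a < b) (hy : y ∈ Ioc a b)
    {g p : ℝ → ℝ}
    (hgc : ContinuousOn g (Icc a b)) (hgd : ∀ u ∈ Icc a b, HasDerivAt g (deriv g u) u)
    (hg'c : ContinuousOn (deriv g) (Icc a b)) (hsm : StrictMonoOn g (Icc a b))
    (hlow : ∀ u ∈ Icc a b, ∀ v ∈ Icc a b, u ≤ v → m * (v - u) ≤ g v - g u)
    (hp : ContinuousOn p (Icc a b)) :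
    ((∫ u in a..y, (g y - g u) ^ β * p u)
      = ∫ r in a..y, β * (∫ u in a..r, (g r - g u) ^ (β - 1) * p u) * deriv g r)
    ∧ IntegrableOn (fun r => β * (∫ u in a..r, (g r - g u) ^ (β - 1) * p u) * deriv g r)
        (Ioc a y) volume := by
  have hay : a ≤ y := hy.1.le
  obtain ⟨Cp, hCp⟩ := isCompact_Icc.exists_bound_of_continuousOn hp
  obtain ⟨CL, hCL⟩ := isCompact_Icc.exists_bound_of_continuousOn hg'c
  have hCp0 : 0 ≤ Cp := le_trans (norm_nonneg _) (hCp a ⟨le_rfl, hab.le⟩)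
  have hCL0 : 0 ≤ CL := le_trans (norm_nonneg _) (hCL a ⟨le_rfl, hab.le⟩)
  set ψ : ℝ × ℝ → ℝ := fun z => β * ((g z.1 - g z.2) ^ (β - 1) * p z.2) * deriv g z.1 with hψdef
  set S : Set (ℝ × ℝ) := {z | z.2 < z.1} with hSdef
  have hS : MeasurableSet S := measurableSet_lt measurable_snd measurable_fst
  set Φ : ℝ × ℝ → ℝ := S.indicator ψ with hΦdef
  set μ : Measure ℝ := volume.restrict (Ioc a y) with hμdef
  set q : ℝ → ℝ := fun r => β * (∫ u in a..r, (g r - g u) ^ (β - 1) * p u) * deriv g r with hqdef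
  -- rewriting the slices of Φ
  have hΦr : ∀ r, (fun u => Φ (r, u)) = (Iio r).indicator (fun u => ψ (r, u)) := by
    intro r; funext u
    simp only [Φ, Set.indicator_apply, S, Set.mem_setOf_eq, Set.mem_Iio]
  have hΦu : ∀ u, (fun r => Φ (r, u)) = (Ioi u).indicator (fun r => ψ (r, u)) := by
    intro u; funext r
    simp only [Φ, Set.indicator_apply, S, Set.mem_setOf_eq, Set.mem_Ioi]
  -- set algebra
  have hset1 : ∀ r ∈ Ioc a y, Iio r ∩ Ioc a y = Ioo a r := by
    intro r hr; ext z
    exact ⟨fun h => ⟨h.2.1, h.1⟩, fun h => ⟨h.2, h.1, le_trans h.2.le hr.2⟩⟩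
  have hset2 : ∀ u ∈ Ioc a y, Ioi u ∩ Ioc a y = Ioc u y := by
    intro u hu; ext z
    exact ⟨fun h => ⟨h.1, h.2.2⟩, fun h => ⟨h.1, lt_trans hu.1 h.1, h.2⟩⟩
  -- integrability of slices in u
  have hinner_int : ∀ r ∈ Ioc a y, IntervalIntegrable
      (fun u => (g r - g u) ^ (β - 1) * p u) volume a r := by
    intro r hr
    have hsub : Icc a r ⊆ Icc a b := Icc_subset_Icc le_rfl (le_trans hr.2 hy.2)
    exact prfd_integrable_right hβ0 hβ1 hm hr.1.le (hgc.mono hsub) (hp.mono hsub)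
      (fun u hu => hlow u (hsub hu) r (hsub ⟨hr.1.le, le_rfl⟩) hu.2)
  have hslice_u : ∀ r ∈ Ioc a y, Integrable (fun u => Φ (r, u)) μ := by
    intro r hr
    rw [hΦr r, hμdef, integrable_indicator_iff measurableSet_Iio]
    have h1 := ((hinner_int r hr).const_mul β).mul_const (deriv g r)
    have h2 := (intervalIntegrable_iff_integrableOn_Ioc_of_le hr.1.le).mp h1
    have h3 : IntegrableOn (fun u => β * ((g r - g u) ^ (β - 1) * p u) * deriv g r)
        (Ioo a r) volume := h2.mono_set Ioo_subset_Ioc_self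
    rw [IntegrableOn, Measure.restrict_restrict measurableSet_Iio, hset1 r hr]
    exact h3
  -- a.e. strong measurability of Φ on the product
  have hΦm : AEStronglyMeasurable Φ (μ.prod μ) := by
    rw [hμdef, Measure.prod_restrict]
    rw [aestronglyMeasurable_indicator_iff hS]
    set T : Set (ℝ × ℝ) := {z | a ≤ z.2 ∧ z.2 < z.1 ∧ z.1 ≤ b} with hTdef
    have hT : MeasurableSet T := by
      apply MeasurableSet.inter (measurableSet_le measurable_const measurable_snd)
      exact MeasurableSet.inter (measurableSet_lt measurable_snd measurable_fst)
        (measurableSet_le measurable_fst measurable_const)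
    have hmaps1 : MapsTo (fun z : ℝ × ℝ => z.1) T (Icc a b) :=
      fun z hz => ⟨le_trans hz.1 hz.2.1.le, hz.2.2⟩
    have hmaps2 : MapsTo (fun z : ℝ × ℝ => z.2) T (Icc a b) :=
      fun z hz => ⟨hz.1, le_trans hz.2.1.le hz.2.2⟩
    have hcT : ContinuousOn ψ T := by
      have hg1 : ContinuousOn (fun z : ℝ × ℝ => g z.1) T :=
        hgc.comp continuous_fst.continuousOn hmaps1
      have hg2 : ContinuousOn (fun z : ℝ × ℝ => g z.2) T :=
        hgc.comp continuous_snd.continuousOn hmaps2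
      have hker : ContinuousOn (fun z : ℝ × ℝ => (g z.1 - g z.2) ^ (β - 1)) T := by
        refine (hg1.sub hg2).rpow_const ?_
        intro z hz
        left
        have := hsm (hmaps2 hz) (hmaps1 hz) hz.2.1
        exact (sub_pos.mpr this).ne'
      exact (continuousOn_const.mul
        (hker.mul (hp.comp continuous_snd.continuousOn hmaps2))).mul
        (hg'c.comp continuous_fst.continuousOn hmaps1)
    have hae : AEStronglyMeasurable ψ ((volume : Measure (ℝ × ℝ)).restrict T) :=
      hcT.aestronglyMeasurable hT
    rw [← Measure.volume_eq_prod]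
    refine hae.mono_measure ?_
    rw [Measure.restrict_restrict hS]
    refine Measure.restrict_mono ?_ le_rfl
    rintro z ⟨hz1, hz2⟩
    exact ⟨hz2.2.1.le, hz1, le_trans hz2.1.2 hy.2⟩
  -- uniform bound for the norm-integrals
  set D : ℝ := (β * m ^ (β - 1) * Cp * CL / β) * max 1 (b - a) with hDdef
  have hnormbd : ∀ r ∈ Ioc a y, (∫ u, ‖Φ (r, u)‖ ∂μ) ≤ D := by
    intro r hr
    have hrb : r ≤ b := le_trans hr.2 hy.2
    have hsub : Icc a r ⊆ Icc a b := Icc_subset_Icc le_rfl hrb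
    have h1 : (fun u => ‖Φ (r, u)‖) = (Iio r).indicator (fun u => ‖ψ (r, u)‖) := by
      funext u
      rw [show Φ (r, u) = (Iio r).indicator (fun u => ψ (r, u)) u from congrFun (hΦr r) u]
      exact norm_indicator_eq_indicator_norm _ u
    rw [h1, hμdef, MeasureTheory.integral_indicator measurableSet_Iio,
      Measure.restrict_restrict measurableSet_Iio, hset1 r hr]
    have hIψ : IntegrableOn (fun u => ‖ψ (r, u)‖) (Ioo a r) volume := by
      have := hslice_u r hr
      rw [hΦr r, hμdef, integrable_indicator_iff measurableSet_Iio, IntegrableOn,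
        Measure.restrict_restrict measurableSet_Iio, hset1 r hr] at this
      exact this.norm
    have hIB : IntegrableOn (fun u => β * (m ^ (β - 1) * (r - u) ^ (β - 1) * Cp) * CL)
        (Ioo a r) volume := by
      have h2 : IntervalIntegrable (fun t : ℝ => t ^ (β - 1)) volume 0 (r - a) :=
        intervalIntegral.intervalIntegrable_rpow' (by linarith)
      have h3 := ((h2.comp_sub_left r).symm.const_mul (β * m ^ (β - 1) * Cp * CL))
      rw [sub_sub_cancel, sub_zero] at h3
      have h4 := (intervalIntegrable_iff_integrableOn_Ioc_of_le hr.1.le).mp h3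
      refine ((h4.mono_set Ioo_subset_Ioc_self).congr_fun ?_ measurableSet_Ioo)
      intro u _
      ring
    have hle : ∀ u ∈ Ioo a r, ‖ψ (r, u)‖ ≤ β * (m ^ (β - 1) * (r - u) ^ (β - 1) * Cp) * CL := by
      intro u hu
      have hum : u ∈ Icc a b := hsub ⟨hu.1.le, hu.2.le⟩
      have hrm : r ∈ Icc a b := ⟨hr.1.le, hrb⟩
      have hru : 0 < r - u := sub_pos.mpr hu.2
      have h0 : 0 < g r - g u := lt_of_lt_of_le (mul_pos hm hru) (hlow u hum r hrm hu.2.le)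
      have hker : (g r - g u) ^ (β - 1) ≤ m ^ (β - 1) * (r - u) ^ (β - 1) := by
        rw [← Real.mul_rpow hm.le hru.le]
        exact Real.rpow_le_rpow_of_nonpos (mul_pos hm hru) (hlow u hum r hrm hu.2.le)
          (by linarith)
      calc ‖ψ (r, u)‖ = β * ((g r - g u) ^ (β - 1) * |p u|) * |deriv g r| := by
            simp only [hψdef, Real.norm_eq_abs, abs_mul, abs_of_nonneg hβ0.le,
              abs_of_nonneg (Real.rpow_nonneg h0.le (β - 1))]
        _ ≤ β * (m ^ (β - 1) * (r - u) ^ (β - 1) * Cp) * CL := by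
            have hpu : |p u| ≤ Cp := by simpa [Real.norm_eq_abs] using hCp u hum
            have hgr : |deriv g r| ≤ CL := by simpa [Real.norm_eq_abs] using hCL r hrm
            have hknn : (0:ℝ) ≤ (g r - g u) ^ (β - 1) := Real.rpow_nonneg h0.le _
            have := mul_le_mul hker hpu (abs_nonneg _)
              (by positivity : (0:ℝ) ≤ m ^ (β - 1) * (r - u) ^ (β - 1))
            have h5 := mul_le_mul_of_nonneg_left this hβ0.le
            have h6 := mul_le_mul h5 hgr (abs_nonneg _)
              (by positivity : (0:ℝ) ≤ β * (m ^ (β - 1) * (r - u) ^ (β - 1) * Cp))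
            exact h6
    calc (∫ u in Ioo a r, ‖ψ (r, u)‖)
        ≤ ∫ u in Ioo a r, β * (m ^ (β - 1) * (r - u) ^ (β - 1) * Cp) * CL :=
          setIntegral_mono_on hIψ hIB measurableSet_Ioo hle
      _ = ∫ u in a..r, β * (m ^ (β - 1) * (r - u) ^ (β - 1) * Cp) * CL := by
          rw [intervalIntegral.integral_of_le hr.1.le,
            Measure.restrict_congr_set Ioo_ae_eq_Ioc]
      _ = (β * m ^ (β - 1) * Cp * CL) * ((r - a) ^ β / β) := by
          rw [show (fun u => β * (m ^ (β - 1) * (r - u) ^ (β - 1) * Cp) * CL)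
            = fun u => (β * m ^ (β - 1) * Cp * CL) * (r - u) ^ (β - 1) from
            funext fun u => by ring]
          rw [intervalIntegral.integral_const_mul, prfd_rpow_integral hβ0 a r hr.1.le]
      _ ≤ D := by
          rw [hDdef]
          have h7 : (r - a) ^ β ≤ max 1 (b - a) :=
            prfd_rpow_le_max (by linarith [hr.1]) (by linarith) hβ0 hβ1.le
          have h8 : (0:ℝ) ≤ β * m ^ (β - 1) * Cp * CL / β := by positivity
          calc (β * m ^ (β - 1) * Cp * CL) * ((r - a) ^ β / β)
              = (β * m ^ (β - 1) * Cp * CL / β) * (r - a) ^ β := by ring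
            _ ≤ (β * m ^ (β - 1) * Cp * CL / β) * max 1 (b - a) :=
              mul_le_mul_of_nonneg_left h7 h8
  -- integrability of Φ on the product
  have hΦint : Integrable Φ (μ.prod μ) := by
    refine (integrable_prod_iff hΦm).mpr ⟨?_, ?_⟩
    · rw [hμdef]
      exact (ae_restrict_iff' measurableSet_Ioc).mpr (Eventually.of_forall hslice_u)
    · refine Integrable.mono' (g := fun _ => D) ?_ hΦm.norm.integral_prod_right' ?_
      · rw [hμdef]
        exact integrableOn_const measure_Ioc_lt_top.ne
      · rw [hμdef]
        refine (ae_restrict_iff' measurableSet_Ioc).mpr (Eventually.of_forall ?_)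
        intro r hr
        rw [Real.norm_eq_abs, abs_of_nonneg (integral_nonneg (fun u => norm_nonneg _))]
        exact hnormbd r hr
  -- inner integral in u
  have hinner_val : ∀ r ∈ Ioc a y, (∫ u, Φ (r, u) ∂μ) = q r := by
    intro r hr
    rw [hΦr r, hμdef, MeasureTheory.integral_indicator measurableSet_Iio,
      Measure.restrict_restrict measurableSet_Iio, hset1 r hr,
      Measure.restrict_congr_set Ioo_ae_eq_Ioc,
      ← intervalIntegral.integral_of_le hr.1.le]
    rw [hqdef]
    simp only [hψdef]
    rw [intervalIntegral.integral_mul_const, intervalIntegral.integral_const_mul]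
  -- inner integral in r
  have hinner_val2 : ∀ u ∈ Ioc a y, (∫ r, Φ (r, u) ∂μ) = (g y - g u) ^ β * p u := by
    intro u hu
    rw [hΦu u, hμdef, MeasureTheory.integral_indicator measurableSet_Ioi,
      Measure.restrict_restrict measurableSet_Ioi, hset2 u hu,
      Measure.restrict_congr_set Ioo_ae_eq_Ioc.symm,
      Measure.restrict_congr_set Ioo_ae_eq_Ioc,
      ← intervalIntegral.integral_of_le hu.2]
    have hsub : Icc u y ⊆ Icc a b := Icc_subset_Icc hu.1.le hy.2
    have hftc := prfd_ftc_left hβ0 hβ1 hm hu.2 (hgc.mono hsub)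
      (fun r hr => hgd r (hsub hr)) (hg'c.mono hsub)
      (fun r hr => hlow u (hsub ⟨le_rfl, hu.2⟩) r (hsub hr) hr.1)
    have hcongr : (∫ r in u..y, ψ (r, u))
        = (β * p u) * ∫ r in u..y, (g r - g u) ^ (β - 1) * deriv g r := by
      rw [← intervalIntegral.integral_const_mul]
      apply intervalIntegral.integral_congr
      intro r _
      simp only [hψdef]
      ring
    rw [hcongr, hftc]
    field_simp
  -- Fubini swap
  have hswap := MeasureTheory.integral_integral_swap (μ := μ) (ν := μ)
    (f := fun r u => Φ (r, u)) hΦint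
  have hL : (∫ r, (∫ u, Φ (r, u) ∂μ) ∂μ) = ∫ r in a..y, q r := by
    rw [intervalIntegral.integral_of_le hay, hμdef]
    exact integral_congr_ae ((ae_restrict_iff' measurableSet_Ioc).mpr
      (Eventually.of_forall hinner_val))
  have hR : (∫ u, (∫ r, Φ (r, u) ∂μ) ∂μ) = ∫ u in a..y, (g y - g u) ^ β * p u := by
    rw [intervalIntegral.integral_of_le hay, hμdef]
    exact integral_congr_ae ((ae_restrict_iff' measurableSet_Ioc).mpr
      (Eventually.of_forall hinner_val2))
  constructor
  · rw [← hL, ← hR]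
    exact hswap.symm
  · have h9 := hΦint.integral_prod_left
    refine (Integrable.congr h9 ?_ : Integrable q μ)
    rw [hμdef]
    exact (ae_restrict_iff' measurableSet_Ioc).mpr (Eventually.of_forall hinner_val)

/-- the "near" part of the Abel integral is uniformly small -/
lemma prfd_near_bound {β m Cp : ℝ} (hβ0 : 0 < β) (hβ1 : β < 1) (hm : 0 < m)
    {a b : ℝ} {g p : ℝ → ℝ}
    (hgc : ContinuousOn g (Icc a b))
    (hlow : ∀ u ∈ Icc a b, ∀ w ∈ Icc a b, u ≤ w → m * (w - u) ≤ g w - g u)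
    (hp : ContinuousOn p (Icc a b)) (hCp : ∀ u ∈ Icc a b, |p u| ≤ Cp)
    {v r : ℝ} (hav : a ≤ v) (hvr : v ≤ r) (hrb : r ≤ b) :
    ‖∫ u in v..r, (g r - g u) ^ (β - 1) * p u‖ ≤ (Cp * m ^ (β - 1) / β) * (r - v) ^ β := by
  have hsub : Icc v r ⊆ Icc a b := Icc_subset_Icc hav hrb
  have hCp0 : 0 ≤ Cp := le_trans (abs_nonneg _) (hCp v (hsub ⟨le_rfl, hvr⟩))
  have hbint : IntervalIntegrable (fun u => Cp * m ^ (β - 1) * (r - u) ^ (β - 1)) volume v r := by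
    have h1 : IntervalIntegrable (fun t : ℝ => t ^ (β - 1)) volume 0 (r - v) :=
      intervalIntegral.intervalIntegrable_rpow' (by linarith)
    have h2 := ((h1.comp_sub_left r).symm.const_mul (Cp * m ^ (β - 1)))
    rwa [sub_sub_cancel, sub_zero] at h2
  have hle : ∀ᵐ t ∂volume.restrict (Set.uIoc v r),
      ‖(g r - g t) ^ (β - 1) * p t‖ ≤ Cp * m ^ (β - 1) * (r - t) ^ (β - 1) := by
    rw [uIoc_of_le hvr]
    filter_upwards [ae_restrict_mem measurableSet_Ioc] with u hu
    rcases eq_or_lt_of_le hu.2 with rfl | hur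
    · rw [sub_self, Real.zero_rpow (by linarith : β - 1 ≠ 0), zero_mul, sub_self,
        Real.zero_rpow (by linarith : β - 1 ≠ 0)]
      simp
    · have hru : 0 < r - u := sub_pos.mpr hur
      have hum : u ∈ Icc a b := hsub ⟨hu.1.le, hu.2⟩
      have hrm : r ∈ Icc a b := hsub ⟨hvr, le_rfl⟩
      have h0 : 0 < g r - g u := lt_of_lt_of_le (mul_pos hm hru) (hlow u hum r hrm hu.2)
      have hker : (g r - g u) ^ (β - 1) ≤ m ^ (β - 1) * (r - u) ^ (β - 1) := by
        rw [← Real.mul_rpow hm.le hru.le]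
        exact Real.rpow_le_rpow_of_nonpos (mul_pos hm hru) (hlow u hum r hrm hu.2)
          (by linarith)
      calc ‖(g r - g u) ^ (β - 1) * p u‖ = (g r - g u) ^ (β - 1) * |p u| := by
            rw [Real.norm_eq_abs, abs_mul, abs_of_nonneg (Real.rpow_nonneg h0.le _)]
        _ ≤ (m ^ (β - 1) * (r - u) ^ (β - 1)) * Cp :=
            mul_le_mul hker (hCp u hum) (abs_nonneg _) (by positivity)
        _ = Cp * m ^ (β - 1) * (r - u) ^ (β - 1) := by ring
  calc ‖∫ u in v..r, (g r - g u) ^ (β - 1) * p u‖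
      ≤ |∫ u in v..r, Cp * m ^ (β - 1) * (r - u) ^ (β - 1)| :=
        intervalIntegral.norm_integral_le_abs_of_norm_le hle hbint
    _ = |Cp * m ^ (β - 1) * ((r - v) ^ β / β)| := by
        rw [intervalIntegral.integral_const_mul, prfd_rpow_integral hβ0 v r hvr]
    _ = Cp * m ^ (β - 1) * ((r - v) ^ β / β) := by
        rw [abs_of_nonneg]
        have : (0:ℝ) ≤ (r - v) ^ β := Real.rpow_nonneg (by linarith) β
        positivity
    _ = (Cp * m ^ (β - 1) / β) * (r - v) ^ β := by ring

/-- continuity at an interior point of the (moving) Abel integral -/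
lemma prfd_Jcont {β m : ℝ} (hβ0 : 0 < β) (hβ1 : β < 1) (hm : 0 < m)
    {a b x : ℝ} (hab : a < b) (hx : x ∈ Ioo a b)
    {g p : ℝ → ℝ}
    (hgc : ContinuousOn g (Icc a b)) (hgd : ∀ u ∈ Icc a b, HasDerivAt g (deriv g u) u)
    (hg'c : ContinuousOn (deriv g) (Icc a b))
    (hlow : ∀ u ∈ Icc a b, ∀ w ∈ Icc a b, u ≤ w → m * (w - u) ≤ g w - g u)
    (hp : ContinuousOn p (Icc a b)) :
    ContinuousAt (fun r => ∫ u in a..r, (g r - g u) ^ (β - 1) * p u) x := by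
  obtain ⟨Cp', hCp'⟩ := isCompact_Icc.exists_bound_of_continuousOn hp
  set Cp : ℝ := Cp' + 1 with hCpdef
  have hCp : ∀ u ∈ Icc a b, |p u| ≤ Cp := by
    intro u hu
    have := hCp' u hu
    rw [Real.norm_eq_abs] at this
    linarith
  have hCp'0 : 0 ≤ Cp' := le_trans (norm_nonneg _) (hCp' a ⟨le_rfl, hab.le⟩)
  have hCppos : 0 < Cp := by rw [hCpdef]; linarith
  have hax : a < x := hx.1
  have hxb : x < b := hx.2
  rw [Metric.continuousAt_iff]
  intro ε hε
  have hmpow : 0 < m ^ (β - 1) := Real.rpow_pos_of_pos hm _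
  set c : ℝ := Cp * m ^ (β - 1) / β with hcdef
  have hcpos : 0 < c := by rw [hcdef]; positivity
  set θ0 : ℝ := (ε / 4 / c) ^ (β⁻¹) with hθ0def
  have hθ0pos : 0 < θ0 := Real.rpow_pos_of_pos (by positivity) _
  have hθ0pow : θ0 ^ β = ε / 4 / c := by
    rw [hθ0def, ← Real.rpow_mul (by positivity), inv_mul_cancel₀ hβ0.ne', Real.rpow_one]
  set θ : ℝ := min (min ((x - a)/2) ((b - x)/2)) (θ0/3) with hθdef
  have hθpos : 0 < θ := lt_min (lt_min (by linarith) (by linarith)) (by linarith)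
  have hθ1 : θ ≤ (x - a)/2 := le_trans (min_le_left _ _) (min_le_left _ _)
  have hθ2 : θ ≤ (b - x)/2 := le_trans (min_le_left _ _) (min_le_right _ _)
  have hθ3 : θ ≤ θ0/3 := min_le_right _ _
  set v : ℝ := x - θ with hvdef
  have hav : a ≤ v := by rw [hvdef]; linarith
  have hvx : v < x := by rw [hvdef]; linarith
  -- the near-part bound specialized
  have hnear' : ∀ r, v < r → r ≤ b → r - v ≤ θ0 →
      ‖∫ u in v..r, (g r - g u) ^ (β - 1) * p u‖ ≤ ε / 4 := by
    intro r hvr hrb hrv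
    have h1 := prfd_near_bound hβ0 hβ1 hm hgc hlow hp hCp hav hvr.le hrb
    have h2 : (r - v) ^ β ≤ θ0 ^ β :=
      Real.rpow_le_rpow (by linarith) hrv hβ0.le
    rw [hθ0pow] at h2
    calc ‖∫ u in v..r, (g r - g u) ^ (β - 1) * p u‖ ≤ c * (r - v) ^ β := h1
      _ ≤ c * (ε / 4 / c) := mul_le_mul_of_nonneg_left h2 hcpos.le
      _ = ε / 4 := by field_simp
  -- far part and its continuity
  set J1 : ℝ → ℝ := fun r => ∫ u in a..v, (g r - g u) ^ (β - 1) * p u with hJ1def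
  have hJ1cont : ContinuousAt J1 x := by
    apply intervalIntegral.continuousAt_of_dominated_interval
      (bound := fun _ => (m * (θ/2)) ^ (β - 1) * Cp)
    · filter_upwards [Metric.ball_mem_nhds x (half_pos hθpos)] with r hr
      rw [Metric.mem_ball, Real.dist_eq, abs_lt] at hr
      have hvr : v < r := by rw [hvdef]; linarith
      have hrb : r ≤ b := by linarith
      rw [uIoc_of_le hav]
      refine ContinuousOn.aestronglyMeasurable ?_ measurableSet_Ioc
      refine ContinuousOn.mul ?_ ((hp.mono (Icc_subset_Icc le_rfl (by linarith))).mono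
        Ioc_subset_Icc_self)
      refine ContinuousOn.rpow_const (continuousOn_const.sub
        (((hgc.mono (Icc_subset_Icc le_rfl (by linarith)))).mono Ioc_subset_Icc_self)) ?_
      intro u hu
      left
      have hum : u ∈ Icc a b := ⟨hu.1.le, by linarith [hu.2]⟩
      have hrm : r ∈ Icc a b := ⟨by linarith, hrb⟩
      have h0 : 0 < g r - g u :=
        lt_of_lt_of_le (mul_pos hm (by linarith [hu.2] : (0:ℝ) < r - u))
          (hlow u hum r hrm (by linarith [hu.2]))
      exact h0.ne'
    · filter_upwards [Metric.ball_mem_nhds x (half_pos hθpos)] with r hr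
      rw [Metric.mem_ball, Real.dist_eq, abs_lt] at hr
      refine Eventually.of_forall ?_
      intro u hu
      rw [uIoc_of_le hav] at hu
      have hum : u ∈ Icc a b := ⟨hu.1.le, by linarith [hu.2]⟩
      have hrm : r ∈ Icc a b := ⟨by linarith, by linarith⟩
      have hbase : m * (θ/2) ≤ g r - g u := by
        calc m * (θ/2) ≤ m * (r - u) := by
              have : θ/2 ≤ r - u := by linarith [hu.2]
              exact mul_le_mul_of_nonneg_left this hm.le
          _ ≤ g r - g u := hlow u hum r hrm (by linarith [hu.2])
      have h0 : 0 < m * (θ/2) := by positivity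
      have hker : (g r - g u) ^ (β - 1) ≤ (m * (θ/2)) ^ (β - 1) :=
        Real.rpow_le_rpow_of_nonpos h0 hbase (by linarith)
      calc ‖(g r - g u) ^ (β - 1) * p u‖ = (g r - g u) ^ (β - 1) * |p u| := by
            rw [Real.norm_eq_abs, abs_mul,
              abs_of_nonneg (Real.rpow_nonneg (le_trans h0.le hbase) _)]
        _ ≤ (m * (θ/2)) ^ (β - 1) * Cp :=
            mul_le_mul hker (hCp u hum) (abs_nonneg _) (Real.rpow_nonneg h0.le _)
    · exact intervalIntegrable_const
    · refine Eventually.of_forall ?_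
      intro u hu
      rw [uIoc_of_le hav] at hu
      have hum : u ∈ Icc a b := ⟨hu.1.le, by linarith [hu.2]⟩
      have h0 : 0 < g x - g u :=
        lt_of_lt_of_le (mul_pos hm (by linarith [hu.2] : (0:ℝ) < x - u))
          (hlow u hum x ⟨hax.le, hxb.le⟩ (by linarith [hu.2]))
      have hgx : ContinuousAt g x := (hgd x ⟨hax.le, hxb.le⟩).continuousAt
      exact ((hgx.sub continuousAt_const).rpow_const (Or.inl h0.ne')).mul continuousAt_const
  rw [Metric.continuousAt_iff] at hJ1cont
  obtain ⟨δ1, hδ1pos, hδ1⟩ := hJ1cont (ε/4) (by linarith)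
  refine ⟨min δ1 (θ/2), lt_min hδ1pos (by linarith), ?_⟩
  intro r hdist
  have hr1 : dist r x < δ1 := lt_of_lt_of_le hdist (min_le_left _ _)
  have hr2 : |r - x| < θ/2 := by
    rw [← Real.dist_eq]; exact lt_of_lt_of_le hdist (min_le_right _ _)
  rw [abs_lt] at hr2
  have hvr : v < r := by rw [hvdef]; linarith
  have hrb : r ≤ b := by linarith
  -- splitting
  have hsplitgen : ∀ s, v < s → s ≤ b →
      (∫ u in a..s, (g s - g u) ^ (β - 1) * p u)
        = (∫ u in a..v, (g s - g u) ^ (β - 1) * p u)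
          + ∫ u in v..s, (g s - g u) ^ (β - 1) * p u := by
    intro s hvs hsb
    have h1 : IntervalIntegrable (fun u => (g s - g u) ^ (β - 1) * p u) volume a v := by
      refine ContinuousOn.intervalIntegrable_of_Icc hav ?_
      refine ContinuousOn.mul ?_ (hp.mono (Icc_subset_Icc le_rfl (by linarith)))
      refine ContinuousOn.rpow_const (continuousOn_const.sub
        (hgc.mono (Icc_subset_Icc le_rfl (by linarith)))) ?_
      intro u hu
      left
      have hum : u ∈ Icc a b := ⟨hu.1, by linarith [hu.2]⟩
      have hsm : s ∈ Icc a b := ⟨by linarith, hsb⟩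
      exact (lt_of_lt_of_le (mul_pos hm (by linarith [hu.2] : (0:ℝ) < s - u))
        (hlow u hum s hsm (by linarith [hu.2]))).ne'
    have h2 : IntervalIntegrable (fun u => (g s - g u) ^ (β - 1) * p u) volume v s := by
      have hsub : Icc v s ⊆ Icc a b := Icc_subset_Icc hav hsb
      exact prfd_integrable_right hβ0 hβ1 hm hvs.le (hgc.mono hsub) (hp.mono hsub)
        (fun u hu => hlow u (hsub hu) s (hsub ⟨hvs.le, le_rfl⟩) hu.2)
    exact (intervalIntegral.integral_add_adjacent_intervals h1 h2).symm
  have hsplit_r := hsplitgen r hvr hrb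
  have hsplit_x := hsplitgen x hvx hxb.le
  rw [Real.dist_eq, hsplit_r, hsplit_x]
  have hNr : ‖∫ u in v..r, (g r - g u) ^ (β - 1) * p u‖ ≤ ε / 4 := by
    refine hnear' r hvr hrb ?_
    rw [hvdef]; linarith
  have hNx : ‖∫ u in v..x, (g x - g u) ^ (β - 1) * p u‖ ≤ ε / 4 := by
    refine hnear' x hvx hxb.le ?_
    rw [hvdef]; linarith
  have hJ1d : |J1 r - J1 x| < ε / 4 := by
    have := hδ1 hr1
    rwa [Real.dist_eq] at this
  rw [Real.norm_eq_abs] at hNr hNx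
  have : J1 r = ∫ u in a..v, (g r - g u) ^ (β - 1) * p u := rfl
  calc |(∫ u in a..v, (g r - g u) ^ (β - 1) * p u) + (∫ u in v..r, (g r - g u) ^ (β - 1) * p u)
      - ((∫ u in a..v, (g x - g u) ^ (β - 1) * p u) + ∫ u in v..x, (g x - g u) ^ (β - 1) * p u)|
      ≤ |J1 r - J1 x| + |∫ u in v..r, (g r - g u) ^ (β - 1) * p u|
        + |∫ u in v..x, (g x - g u) ^ (β - 1) * p u| := by
        rw [hJ1def]
        have habs := abs_sub (G := ℝ)
        calc |(J1 r + (∫ u in v..r, (g r - g u) ^ (β - 1) * p u))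
            - (J1 x + ∫ u in v..x, (g x - g u) ^ (β - 1) * p u)|
            = |(J1 r - J1 x) + ((∫ u in v..r, (g r - g u) ^ (β - 1) * p u)
              - ∫ u in v..x, (g x - g u) ^ (β - 1) * p u)| := by ring_nf
          _ ≤ |J1 r - J1 x| + |(∫ u in v..r, (g r - g u) ^ (β - 1) * p u)
              - ∫ u in v..x, (g x - g u) ^ (β - 1) * p u| := abs_add_le _ _
          _ ≤ |J1 r - J1 x| + (|∫ u in v..r, (g r - g u) ^ (β - 1) * p u|
              + |∫ u in v..x, (g x - g u) ^ (β - 1) * p u|) := by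
              have := abs_sub (∫ u in v..r, (g r - g u) ^ (β - 1) * p u)
                (∫ u in v..x, (g x - g u) ^ (β - 1) * p u)
              linarith [abs_sub_abs_le_abs_sub (∫ u in v..r, (g r - g u) ^ (β - 1) * p u)
                (∫ u in v..x, (g x - g u) ^ (β - 1) * p u), abs_sub_le
                (∫ u in v..r, (g r - g u) ^ (β - 1) * p u) 0
                (∫ u in v..x, (g x - g u) ^ (β - 1) * p u)]
          _ = |J1 r - J1 x| + |∫ u in v..r, (g r - g u) ^ (β - 1) * p u|
              + |∫ u in v..x, (g x - g u) ^ (β - 1) * p u| := by ring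
    _ < ε := by linarith

set_option maxHeartbeats 1000000 in
lemma prfd_T2 {m CL : ℝ} (hm : 0 < m) (hCL0 : 0 < CL)
    {a b x : ℝ} (hab : a < b) (hx : x ∈ Ioo a b)
    {g p : ℝ → ℝ}
    (hgc : ContinuousOn g (Icc a b)) (hgd : ∀ u ∈ Icc a b, HasDerivAt g (deriv g u) u)
    (hg' : ContinuousOn (deriv g) (Icc a b))
    (hgpos : ∀ u ∈ Icc a b, 0 < deriv g u)
    (hCL : ∀ u ∈ Icc a b, ‖deriv g u‖ ≤ CL)
    (hlow : ∀ u ∈ Icc a b, ∀ w ∈ Icc a b, u ≤ w → m * (w - u) ≤ g w - g u)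
    (hp : ContinuousOn p (Icc a b)) :
    Tendsto (fun β : ℝ => β * ∫ u in a..x, (g x - g u) ^ (β - 1) * p u)
      (𝓝[>] (0:ℝ)) (𝓝 (p x / deriv g x)) := by
  have hxm : x ∈ Icc a b := ⟨hx.1.le, hx.2.le⟩
  have ham : a ∈ Icc a b := ⟨le_rfl, hab.le⟩
  have hgax : 0 < g x - g a :=
    lt_of_lt_of_le (mul_pos hm (sub_pos.mpr hx.1)) (hlow a ham x hxm hx.1.le)
  have h0 : Tendsto (fun β : ℝ => β) (𝓝[>] (0:ℝ)) (𝓝 0) :=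
    tendsto_id.mono_right nhdsWithin_le_nhds
  set ρ : ℝ → ℝ := fun u => p u / deriv g u with hρdef
  have hρc : ContinuousOn ρ (Icc a b) :=
    hp.div hg' (fun u hu => (hgpos u hu).ne')
  have hρx : ρ x = p x / deriv g x := rfl
  obtain ⟨Cρ', hCρ'⟩ := isCompact_Icc.exists_bound_of_continuousOn hρc
  have hCρ'0 : 0 ≤ Cρ' := le_trans (norm_nonneg _) (hCρ' a ham)
  set Cρ : ℝ := Cρ' + 1 with hCρdef
  have hCρpos : 0 < Cρ := by rw [hCρdef]; linarith
  have hCρ : ∀ u ∈ Icc a b, |ρ u| ≤ Cρ := by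
    intro u hu
    have := hCρ' u hu
    rw [Real.norm_eq_abs] at this
    linarith
  rw [Metric.tendsto_nhds]
  intro ε hε
  set K1 : ℝ := max 1 (g x - g a) with hK1def
  have hK1pos : (0:ℝ) < K1 := lt_of_lt_of_le one_pos (le_max_left _ _)
  set ε1 : ℝ := ε / 4 / K1 with hε1def
  have hε1pos : 0 < ε1 := by rw [hε1def]; positivity
  have hρcx : ContinuousAt ρ x :=
    (hρc.continuousWithinAt hxm).continuousAt (Icc_mem_nhds hx.1 hx.2)
  rw [Metric.continuousAt_iff] at hρcx
  obtain ⟨δρ, hδρpos, hδρ⟩ := hρcx ε1 hε1pos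
  set v : ℝ := max (x - δρ/2) ((a + x)/2) with hvdef
  have hav : a < v :=
    lt_of_lt_of_le (by linarith [hx.1] : a < (a + x)/2) (le_max_right _ _)
  have hvx : v < x := max_lt (by linarith) (by linarith [hx.1])
  have hvb : v ≤ b := by linarith [hx.2]
  have hvm : v ∈ Icc a b := ⟨hav.le, hvb⟩
  have hρnear : ∀ u ∈ Icc v x, |ρ u - ρ x| ≤ ε1 := by
    intro u hu
    have hxv : x - δρ/2 ≤ v := le_max_left _ _
    have h1 : dist u x < δρ := by
      rw [Real.dist_eq, abs_of_nonpos (by linarith [hu.2])]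
      linarith [hu.1]
    have := hδρ h1
    rw [Real.dist_eq] at this
    exact this.le
  have hgvx : 0 < g x - g v :=
    lt_of_lt_of_le (mul_pos hm (sub_pos.mpr hvx)) (hlow v hvm x hxm hvx.le)
  have hgav : g x - g v ≤ g x - g a := by
    have h1 := hlow a ham v hvm hav.le
    nlinarith [mul_pos hm (sub_pos.mpr hav)]
  have hsubax : Icc a x ⊆ Icc a b := Icc_subset_Icc le_rfl hx.2.le
  have hsubvx : Icc v x ⊆ Icc a b := Icc_subset_Icc hav.le hx.2.le
  have hsubav : Icc a v ⊆ Icc a b := Icc_subset_Icc le_rfl hvb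
  -- the exact decomposition
  have hiden : ∀ β ∈ Ioo (0:ℝ) 1,
      β * (∫ u in a..x, (g x - g u) ^ (β - 1) * p u)
        = (∫ u in a..v, (g x - g u) ^ (β - 1) * (β * deriv g u * (ρ u - ρ x)))
          + (∫ u in v..x, (g x - g u) ^ (β - 1) * (β * deriv g u * (ρ u - ρ x)))
          + ρ x * (g x - g a) ^ β := by
    intro β hβ
    obtain ⟨hβ0, hβ1⟩ := hβ
    have hA_int : IntervalIntegrable
        (fun u => (g x - g u) ^ (β - 1) * (β * deriv g u * (ρ u - ρ x))) volume a x :=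
      prfd_integrable_right hβ0 hβ1 hm hx.1.le (hgc.mono hsubax)
        ((continuousOn_const.mul (hg'.mono hsubax)).mul
          ((hρc.mono hsubax).sub continuousOn_const))
        (fun u hu => hlow u (hsubax hu) x hxm hu.2)
    have hA_int2 : IntervalIntegrable
        (fun u => (g x - g u) ^ (β - 1) * (β * deriv g u * (ρ u - ρ x))) volume v x :=
      prfd_integrable_right hβ0 hβ1 hm hvx.le (hgc.mono hsubvx)
        ((continuousOn_const.mul (hg'.mono hsubvx)).mul
          ((hρc.mono hsubvx).sub continuousOn_const))
        (fun u hu => hlow u (hsubvx hu) x hxm hu.2)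
    have hA_int1 : IntervalIntegrable
        (fun u => (g x - g u) ^ (β - 1) * (β * deriv g u * (ρ u - ρ x))) volume a v := by
      refine ContinuousOn.intervalIntegrable_of_Icc hav.le ?_
      refine ContinuousOn.mul ?_ ((continuousOn_const.mul (hg'.mono hsubav)).mul
        ((hρc.mono hsubav).sub continuousOn_const))
      refine ContinuousOn.rpow_const (continuousOn_const.sub (hgc.mono hsubav)) ?_
      intro u hu
      left
      have hum : u ∈ Icc a b := hsubav hu
      exact (lt_of_lt_of_le (mul_pos hm (by linarith [hu.2, hvx] : (0:ℝ) < x - u))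
        (hlow u hum x hxm (by linarith [hu.2, hvx]))).ne'
    have hkg'_int : IntervalIntegrable
        (fun u => (g x - g u) ^ (β - 1) * deriv g u) volume a x :=
      prfd_integrable_right hβ0 hβ1 hm hx.1.le (hgc.mono hsubax) (hg'.mono hsubax)
        (fun u hu => hlow u (hsubax hu) x hxm hu.2)
    have hftc : (∫ u in a..x, (g x - g u) ^ (β - 1) * deriv g u) = (g x - g a) ^ β / β :=
      prfd_ftc_right hβ0 hβ1 hm hx.1.le (hgc.mono hsubax)
        (fun u hu => hgd u (hsubax hu)) (hg'.mono hsubax)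
        (fun u hu => hlow u (hsubax hu) x hxm hu.2)
    have hpt : ∀ u ∈ uIcc a x, β * ((g x - g u) ^ (β - 1) * p u)
        = (g x - g u) ^ (β - 1) * (β * deriv g u * (ρ u - ρ x))
          + ((g x - g u) ^ (β - 1) * deriv g u) * (β * ρ x) := by
      intro u hu
      rw [uIcc_of_le hx.1.le] at hu
      have hgu : deriv g u ≠ 0 := (hgpos u (hsubax hu)).ne'
      simp only [hρdef]
      field_simp
      ring
    calc β * ∫ u in a..x, (g x - g u) ^ (β - 1) * p u
        = ∫ u in a..x, β * ((g x - g u) ^ (β - 1) * p u) :=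
          (intervalIntegral.integral_const_mul β _).symm
      _ = ∫ u in a..x, ((g x - g u) ^ (β - 1) * (β * deriv g u * (ρ u - ρ x))
          + ((g x - g u) ^ (β - 1) * deriv g u) * (β * ρ x)) :=
          intervalIntegral.integral_congr hpt
      _ = (∫ u in a..x, (g x - g u) ^ (β - 1) * (β * deriv g u * (ρ u - ρ x)))
          + ∫ u in a..x, ((g x - g u) ^ (β - 1) * deriv g u) * (β * ρ x) :=
          intervalIntegral.integral_add hA_int (hkg'_int.mul_const _)
      _ = (∫ u in a..v, (g x - g u) ^ (β - 1) * (β * deriv g u * (ρ u - ρ x)))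
          + (∫ u in v..x, (g x - g u) ^ (β - 1) * (β * deriv g u * (ρ u - ρ x)))
          + ρ x * (g x - g a) ^ β := by
          rw [← intervalIntegral.integral_add_adjacent_intervals hA_int1 hA_int2,
            intervalIntegral.integral_mul_const, hftc]
          field_simp
  -- far-part bound (depends on β, tends to 0)
  have hexp2 : Tendsto (fun β : ℝ => (g x - g v) ^ (β - 1)) (𝓝[>] (0:ℝ))
      (𝓝 (Real.exp (Real.log (g x - g v) * (0 - 1)))) := by
    have heq : (fun β : ℝ => (g x - g v) ^ (β - 1))
        = fun β => Real.exp (Real.log (g x - g v) * (β - 1)) :=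
      funext fun β => Real.rpow_def_of_pos hgvx _
    rw [heq]
    exact (Real.continuous_exp.tendsto _).comp
      (tendsto_const_nhds.mul (h0.sub tendsto_const_nhds))
  have hfar_tend : Tendsto
      (fun β : ℝ => (β * ((g x - g v) ^ (β - 1) * (CL * (2 * Cρ)))) * |v - a|)
      (𝓝[>] (0:ℝ)) (𝓝 0) := by
    have hc1 : Tendsto (fun _ : ℝ => CL * (2 * Cρ)) (𝓝[>] (0:ℝ)) (𝓝 (CL * (2 * Cρ))) :=
      tendsto_const_nhds
    have hc2 : Tendsto (fun _ : ℝ => |v - a|) (𝓝[>] (0:ℝ)) (𝓝 (|v - a|)) :=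
      tendsto_const_nhds
    have := (h0.mul (hexp2.mul hc1)).mul hc2
    simpa using this
  have hfar_ev : ∀ᶠ β in 𝓝[>] (0:ℝ),
      (β * ((g x - g v) ^ (β - 1) * (CL * (2 * Cρ)))) * |v - a| < ε/4 :=
    hfar_tend.eventually_lt_const (by linarith)
  have hfar_bound : ∀ β ∈ Ioo (0:ℝ) 1,
      |∫ u in a..v, (g x - g u) ^ (β - 1) * (β * deriv g u * (ρ u - ρ x))|
        ≤ (β * ((g x - g v) ^ (β - 1) * (CL * (2 * Cρ)))) * |v - a| := by
    intro β hβ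
    rw [← Real.norm_eq_abs]
    rw [show (β * ((g x - g v) ^ (β - 1) * (CL * (2 * Cρ)))) * |v - a|
      = ((g x - g v) ^ (β - 1) * (β * CL * (2 * Cρ))) * |v - a| from by ring]
    refine intervalIntegral.norm_integral_le_of_norm_le_const ?_
    intro u hu
    rw [uIoc_of_le hav.le] at hu
    have hum : u ∈ Icc a b := hsubav ⟨hu.1.le, hu.2⟩
    have hux : u < x := lt_of_le_of_lt hu.2 hvx
    have h1 : 0 < g x - g u :=
      lt_of_lt_of_le (mul_pos hm (sub_pos.mpr hux)) (hlow u hum x hxm hux.le)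
    have hmono : g u ≤ g v := by
      have := hlow u hum v hvm hu.2
      nlinarith [mul_nonneg hm.le (sub_nonneg.mpr hu.2)]
    have hker : (g x - g u) ^ (β - 1) ≤ (g x - g v) ^ (β - 1) :=
      Real.rpow_le_rpow_of_nonpos hgvx (by linarith) (by linarith [hβ.2])
    have hw : |β * deriv g u * (ρ u - ρ x)| ≤ β * CL * (2 * Cρ) := by
      rw [abs_mul, abs_mul, abs_of_nonneg hβ.1.le]
      refine mul_le_mul ?_ ?_ (abs_nonneg _) (mul_nonneg hβ.1.le hCL0.le)
      · refine mul_le_mul_of_nonneg_left ?_ hβ.1.le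
        simpa [Real.norm_eq_abs] using hCL u hum
      · have := abs_sub (ρ u) (ρ x)
        calc |ρ u - ρ x| ≤ |ρ u| + |ρ x| := abs_sub _ _
          _ ≤ Cρ + Cρ := add_le_add (hCρ u hum) (hCρ x hxm)
          _ = 2 * Cρ := by ring
    calc ‖(g x - g u) ^ (β - 1) * (β * deriv g u * (ρ u - ρ x))‖
        = (g x - g u) ^ (β - 1) * |β * deriv g u * (ρ u - ρ x)| := by
          rw [Real.norm_eq_abs, abs_mul, abs_of_nonneg (Real.rpow_nonneg h1.le _)]
      _ ≤ (g x - g v) ^ (β - 1) * (β * CL * (2 * Cρ)) :=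
          mul_le_mul hker hw (abs_nonneg _) (Real.rpow_nonneg hgvx.le _)
  -- near-part bound
  have hnear_bound : ∀ β ∈ Ioo (0:ℝ) 1,
      |∫ u in v..x, (g x - g u) ^ (β - 1) * (β * deriv g u * (ρ u - ρ x))| ≤ ε/4 := by
    intro β hβ
    obtain ⟨hβ0, hβ1⟩ := hβ
    have hb_int : IntervalIntegrable
        (fun u => (g x - g u) ^ (β - 1) * (deriv g u * (β * ε1))) volume v x :=
      prfd_integrable_right hβ0 hβ1 hm hvx.le (hgc.mono hsubvx)
        ((hg'.mono hsubvx).mul continuousOn_const)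
        (fun u hu => hlow u (hsubvx hu) x hxm hu.2)
    have hle : ∀ᵐ t ∂volume.restrict (Set.uIoc v x),
        ‖(g x - g t) ^ (β - 1) * (β * deriv g t * (ρ t - ρ x))‖
          ≤ (g x - g t) ^ (β - 1) * (deriv g t * (β * ε1)) := by
      rw [uIoc_of_le hvx.le]
      filter_upwards [ae_restrict_mem measurableSet_Ioc] with u hu
      have hum : u ∈ Icc a b := hsubvx ⟨hu.1.le, hu.2⟩
      have h1 : 0 ≤ g x - g u := by
        have := hlow u hum x hxm hu.2
        nlinarith [mul_nonneg hm.le (sub_nonneg.mpr hu.2)]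
      have h2 : |ρ u - ρ x| ≤ ε1 := hρnear u ⟨hu.1.le, hu.2⟩
      have h3 : 0 < deriv g u := hgpos u hum
      calc ‖(g x - g u) ^ (β - 1) * (β * deriv g u * (ρ u - ρ x))‖
          = (g x - g u) ^ (β - 1) * (β * deriv g u * |ρ u - ρ x|) := by
            rw [Real.norm_eq_abs, abs_mul, abs_of_nonneg (Real.rpow_nonneg h1 _),
              abs_mul, abs_of_nonneg (mul_nonneg hβ0.le h3.le)]
        _ ≤ (g x - g u) ^ (β - 1) * (β * deriv g u * ε1) := by
            refine mul_le_mul_of_nonneg_left ?_ (Real.rpow_nonneg h1 _)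
            exact mul_le_mul_of_nonneg_left h2 (mul_nonneg hβ0.le h3.le)
        _ = (g x - g u) ^ (β - 1) * (deriv g u * (β * ε1)) := by ring
    have h4 := intervalIntegral.norm_integral_le_abs_of_norm_le hle hb_int
    have hftcv : (∫ u in v..x, (g x - g u) ^ (β - 1) * deriv g u) = (g x - g v) ^ β / β :=
      prfd_ftc_right hβ0 hβ1 hm hvx.le (hgc.mono hsubvx)
        (fun u hu => hgd u (hsubvx hu)) (hg'.mono hsubvx)
        (fun u hu => hlow u (hsubvx hu) x hxm hu.2)
    have h5 : (∫ u in v..x, (g x - g u) ^ (β - 1) * (deriv g u * (β * ε1)))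
        = ε1 * (g x - g v) ^ β := by
      rw [show (fun u => (g x - g u) ^ (β - 1) * (deriv g u * (β * ε1)))
        = fun u => (β * ε1) * ((g x - g u) ^ (β - 1) * deriv g u) from
        funext fun u => by ring]
      rw [intervalIntegral.integral_const_mul, hftcv]
      field_simp
    rw [Real.norm_eq_abs] at h4
    have h6 : |∫ u in v..x, (g x - g u) ^ (β - 1) * (deriv g u * (β * ε1))|
        = ε1 * (g x - g v) ^ β := by
      rw [h5, abs_of_nonneg]
      have := Real.rpow_nonneg hgvx.le β
      positivity
    rw [h6] at h4
    have h7 : (g x - g v) ^ β ≤ K1 := prfd_rpow_le_max hgvx.le hgav hβ0 hβ1.le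
    calc |∫ u in v..x, (g x - g u) ^ (β - 1) * (β * deriv g u * (ρ u - ρ x))|
        ≤ ε1 * (g x - g v) ^ β := h4
      _ ≤ ε1 * K1 := mul_le_mul_of_nonneg_left h7 hε1pos.le
      _ = ε/4 := by rw [hε1def]; field_simp
  -- the third term
  have hexp3 : Tendsto (fun β : ℝ => (g x - g a) ^ β) (𝓝[>] (0:ℝ)) (𝓝 1) := by
    have heq : (fun β : ℝ => (g x - g a) ^ β)
        = fun β => Real.exp (Real.log (g x - g a) * β) :=
      funext fun β => Real.rpow_def_of_pos hgax _
    rw [heq]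
    have := (Real.continuous_exp.tendsto (Real.log (g x - g a) * 0)).comp
      (tendsto_const_nhds.mul h0)
    simpa [Function.comp_def] using this
  have hthird : Tendsto (fun β : ℝ => ρ x * (g x - g a) ^ β) (𝓝[>] (0:ℝ)) (𝓝 (ρ x)) := by
    have hc : Tendsto (fun _ : ℝ => ρ x) (𝓝[>] (0:ℝ)) (𝓝 (ρ x)) := tendsto_const_nhds
    have := hc.mul hexp3
    simpa using this
  have hthird_ev : ∀ᶠ β in 𝓝[>] (0:ℝ), |ρ x * (g x - g a) ^ β - ρ x| < ε/4 := by
    have := Metric.tendsto_nhds.mp hthird (ε/4) (by linarith)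
    filter_upwards [this] with β hβ
    rwa [Real.dist_eq] at hβ
  -- combine
  filter_upwards [Ioo_mem_nhdsGT_of_mem (⟨le_rfl, one_pos⟩ : (0:ℝ) ∈ Ico 0 1),
    hfar_ev, hthird_ev] with β hβ hfe hte
  rw [Real.dist_eq, ← hρx, hiden β hβ]
  have hb1 := le_trans (hfar_bound β hβ) hfe.le
  have hb2 := hnear_bound β hβ
  set A1 : ℝ := ∫ u in a..v, (g x - g u) ^ (β - 1) * (β * deriv g u * (ρ u - ρ x))
  set A2 : ℝ := ∫ u in v..x, (g x - g u) ^ (β - 1) * (β * deriv g u * (ρ u - ρ x))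
  calc |A1 + A2 + ρ x * (g x - g a) ^ β - ρ x|
      ≤ |A1| + |A2| + |ρ x * (g x - g a) ^ β - ρ x| := by
        have h8 : A1 + A2 + ρ x * (g x - g a) ^ β - ρ x
            = A1 + (A2 + (ρ x * (g x - g a) ^ β - ρ x)) := by ring
        rw [h8]
        refine le_trans (abs_add_le _ _) ?_
        have := abs_add_le A2 (ρ x * (g x - g a) ^ β - ρ x)
        linarith
    _ < ε := by linarith


set_option maxHeartbeats 1000000 in
/-- As `α → 1⁻`, the RL-type parametric fractional derivative with power kernel
`h_{1-α}` tends to the classical parametric derivative `f'(x)/g'(x)`. -/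
theorem parametric_RL_FD_tendsto_parametric_deriv
    (a b : ℝ) (hab : a < b) (g : ℝ → ℝ)
    (hg : StrictMonoOn g (Icc a b))
    (hgd : ∀ x ∈ Icc a b, HasDerivAt g (deriv g x) x)
    (hg' : ContinuousOn (deriv g) (Icc a b))
    (hg0 : ∀ x ∈ Icc a b, deriv g x ≠ 0)
    (f : ℝ → ℝ) (hf : ContDiffOn ℝ 1 f (Icc a b)) :
    ∀ x ∈ Ioo a b,
      Tendsto (fun α : ℝ =>
          (1 / Real.Gamma (1 - α)) * (1 / deriv g x) *
            deriv (fun y => ∫ u in a..y, (g y - g u) ^ (-α) * f u * deriv g u) x)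
        (nhdsWithin 1 (Iio 1)) (nhds (deriv f x / deriv g x)) := by
  intro x hx
  -- basic facts about g
  have hgc : ContinuousOn g (Icc a b) := fun u hu => ((hgd u hu).continuousAt).continuousWithinAt
  have hgpos := prfd_deriv_pos hab hg hgd hg0
  obtain ⟨u₀, hu₀mem, hu₀min⟩ := isCompact_Icc.exists_isMinOn (nonempty_Icc.mpr hab.le) hg'
  set m : ℝ := deriv g u₀ with hmdef
  have hm : 0 < m := hgpos u₀ hu₀mem
  obtain ⟨CL, hCL⟩ := isCompact_Icc.exists_bound_of_continuousOn hg'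
  have hCL0 : 0 < CL := lt_of_lt_of_le hm (le_trans (le_abs_self _)
    (by simpa [Real.norm_eq_abs] using hCL u₀ hu₀mem))
  have hmL : ∀ u ∈ Icc a b, m ≤ deriv g u ∧ deriv g u ≤ CL := by
    intro u hu
    refine ⟨isMinOn_iff.mp hu₀min u hu, ?_⟩
    exact le_trans (le_abs_self _) (by simpa [Real.norm_eq_abs] using hCL u hu)
  have hlow : ∀ u ∈ Icc a b, ∀ w ∈ Icc a b, u ≤ w → m * (w - u) ≤ g w - g u :=
    fun u hu w hw huw => (prfd_slope_bounds hgc hgd hmL u hu w hw huw).1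
  -- basic facts about f
  set f1 : ℝ → ℝ := derivWithin f (Icc a b) with hf1def
  have hf1c : ContinuousOn f1 (Icc a b) :=
    hf.continuousOn_derivWithin (uniqueDiffOn_Icc hab) le_rfl
  have hfc : ContinuousOn f (Icc a b) := hf.continuousOn
  have hfd : ∀ u ∈ Ioo a b, HasDerivAt f (f1 u) u := by
    intro u hu
    have hnh : Icc a b ∈ 𝓝 u := Icc_mem_nhds hu.1 hu.2
    have hd : DifferentiableAt ℝ f u := (hf.differentiableOn one_ne_zero).differentiableAt hnh
    have heq : f1 u = deriv f u := derivWithin_of_mem_nhds hnh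
    rw [heq]
    exact hd.hasDerivAt
  have hf1x : f1 x = deriv f x := derivWithin_of_mem_nhds (Icc_mem_nhds hx.1 hx.2)
  have hxm : x ∈ Icc a b := ⟨hx.1.le, hx.2.le⟩
  have ham : a ∈ Icc a b := ⟨le_rfl, hab.le⟩
  have hgx : 0 < deriv g x := hgpos x hxm
  have hgax : 0 < g x - g a :=
    lt_of_lt_of_le (mul_pos hm (sub_pos.mpr hx.1)) (hlow a ham x hxm hx.1.le)
  -- the derivative representation for each β ∈ (0,1)
  have hrepr : ∀ β ∈ Ioo (0:ℝ) 1,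
      deriv (fun y => ∫ u in a..y, (g y - g u) ^ (β - 1) * f u * deriv g u) x
        = deriv g x * (f a * (g x - g a) ^ (β - 1))
          + deriv g x * ∫ u in a..x, (g x - g u) ^ (β - 1) * f1 u := by
    intro β hβ
    obtain ⟨hβ0, hβ1⟩ := hβ
    set q : ℝ → ℝ := fun r => β * (∫ u in a..r, (g r - g u) ^ (β - 1) * f1 u) * deriv g r
      with hqdef
    have hqint_b : IntegrableOn q (Ioc a b) volume :=
      (prfd_fubini hβ0 hβ1 hm hab ⟨hab, le_rfl⟩ hgc hgd hg' hg hlow hf1c).2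
    have hE : (fun y => ∫ u in a..y, (g y - g u) ^ (β - 1) * f u * deriv g u) =ᶠ[𝓝 x]
        (fun y => f a * ((g y - g a) ^ β / β) + (1/β) * ∫ r in a..y, q r) := by
      filter_upwards [isOpen_Ioo.mem_nhds hx] with y hy
      rw [prfd_parts hβ0 hβ1 hm hab ⟨hy.1, hy.2.le⟩ hgc hgd hg' hlow hfc hfd hf1c]
      congr 1
      rw [(prfd_fubini hβ0 hβ1 hm hab ⟨hy.1, hy.2.le⟩ hgc hgd hg' hg hlow hf1c).1]
    have hd1 : HasDerivAt (fun y => f a * ((g y - g a) ^ β / β))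
        (f a * ((β * (g x - g a) ^ (β - 1) * deriv g x) / β)) x := by
      have h1 : HasDerivAt (fun y => g y - g a) (deriv g x) x := (hgd x hxm).sub_const (g a)
      have h2 := (Real.hasDerivAt_rpow_const (x := g x - g a) (p := β)
        (Or.inl hgax.ne')).comp x h1
      exact (h2.div_const β).const_mul (f a)
    have hq_int : IntervalIntegrable q volume a x :=
      (intervalIntegrable_iff_integrableOn_Ioc_of_le hx.1.le).mpr
        (hqint_b.mono_set (Ioc_subset_Ioc le_rfl hx.2.le))
    have hqmeas : StronglyMeasurableAtFilter q (𝓝 x) volume :=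
      ⟨Ioc a b, Ioc_mem_nhds hx.1 hx.2, hqint_b.aestronglyMeasurable⟩
    have hqcont : ContinuousAt q x := by
      have hJc := prfd_Jcont hβ0 hβ1 hm hab hx hgc hgd hg' hlow hf1c
      have hg'x : ContinuousAt (deriv g) x :=
        (hg'.continuousWithinAt hxm).continuousAt (Icc_mem_nhds hx.1 hx.2)
      exact (continuousAt_const.mul hJc).mul hg'x
    have hd2 : HasDerivAt (fun y => ∫ r in a..y, q r) (q x) x :=
      intervalIntegral.integral_hasDerivAt_right hq_int hqmeas hqcont
    have hD : HasDerivAt (fun y => f a * ((g y - g a) ^ β / β) + 1 / β * ∫ r in a..y, q r)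
        (f a * (β * (g x - g a) ^ (β - 1) * deriv g x / β) + 1 / β * q x) x :=
      hd1.add (hd2.const_mul (1/β))
    rw [hE.deriv_eq, hD.deriv, hqdef]
    field_simp
  -- the limiting function in β
  have key : Tendsto (fun β : ℝ =>
      (1 / Real.Gamma β) * (1 / deriv g x) *
        deriv (fun y => ∫ u in a..y, (g y - g u) ^ (β - 1) * f u * deriv g u) x)
      (𝓝[>] (0:ℝ)) (𝓝 (deriv f x / deriv g x)) := by
    -- elementary tendsto facts
    have h0 : Tendsto (fun β : ℝ => β) (𝓝[>] (0:ℝ)) (𝓝 0) :=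
      tendsto_id.mono_right nhdsWithin_le_nhds
    have hexp1 : Tendsto (fun β : ℝ => (g x - g a) ^ (β - 1)) (𝓝[>] (0:ℝ))
        (𝓝 (Real.exp (Real.log (g x - g a) * (0 - 1)))) := by
      have heq : (fun β : ℝ => (g x - g a) ^ (β - 1))
          = fun β => Real.exp (Real.log (g x - g a) * (β - 1)) :=
        funext fun β => Real.rpow_def_of_pos hgax _
      rw [heq]
      exact (Real.continuous_exp.tendsto _).comp
        (tendsto_const_nhds.mul (h0.sub tendsto_const_nhds))
    have T1 : Tendsto (fun β : ℝ => β * (f a * (g x - g a) ^ (β - 1))) (𝓝[>] (0:ℝ)) (𝓝 0) := by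
      have hc : Tendsto (fun _ : ℝ => f a) (𝓝[>] (0:ℝ)) (𝓝 (f a)) := tendsto_const_nhds
      have := h0.mul (hc.mul hexp1)
      simpa using this
    have T0 : Tendsto (fun β : ℝ => Real.Gamma (β + 1)) (𝓝[>] (0:ℝ)) (𝓝 1) := by
      have h1 : ContinuousAt Real.Gamma 1 := by
        have hd : DifferentiableAt ℝ Real.Gamma 1 := Real.differentiableAt_Gamma (fun n => by
          have hn := Nat.cast_nonneg (α := ℝ) n
          intro hcon
          linarith)
        exact hd.continuousAt
      have h2 : Tendsto (fun β : ℝ => β + 1) (𝓝[>] (0:ℝ)) (𝓝 1) := by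
        have h2a : Tendsto (fun β : ℝ => β + 1) (𝓝 (0:ℝ)) (𝓝 ((0:ℝ) + 1)) :=
          Continuous.tendsto (by continuity) 0
        rw [zero_add] at h2a
        exact h2a.mono_left nhdsWithin_le_nhds
      have h3 := h1.tendsto.comp h2
      rwa [Real.Gamma_one] at h3
    -- main term
    have T2 : Tendsto (fun β : ℝ => β * ∫ u in a..x, (g x - g u) ^ (β - 1) * f1 u)
        (𝓝[>] (0:ℝ)) (𝓝 (deriv f x / deriv g x)) := by
      have := prfd_T2 hm hCL0 hab hx hgc hgd hg' hgpos hCL hlow hf1c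
      rwa [hf1x] at this
    -- eventual equality
    have hcongr : ∀ᶠ β in 𝓝[>] (0:ℝ),
        (β * (f a * (g x - g a) ^ (β - 1)) + β * ∫ u in a..x, (g x - g u) ^ (β - 1) * f1 u)
            / Real.Gamma (β + 1)
          = (1 / Real.Gamma β) * (1 / deriv g x) *
            deriv (fun y => ∫ u in a..y, (g y - g u) ^ (β - 1) * f u * deriv g u) x := by
      filter_upwards [Ioo_mem_nhdsGT_of_mem (⟨le_rfl, one_pos⟩ : (0:ℝ) ∈ Ico 0 1)] with β hβ
      rw [hrepr β hβ]
      have hΓβ : 0 < Real.Gamma β := Real.Gamma_pos_of_pos hβ.1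
      rw [Real.Gamma_add_one hβ.1.ne']
      set P : ℝ := f a * (g x - g a) ^ (β - 1)
      set Jv : ℝ := ∫ u in a..x, (g x - g u) ^ (β - 1) * f1 u
      have h5 : (1 / Real.Gamma β) * (1 / deriv g x) * (deriv g x * P + deriv g x * Jv)
          = (P + Jv) / Real.Gamma β := by
        field_simp
      rw [h5, show β * P + β * Jv = β * (P + Jv) from by ring,
        mul_div_mul_left _ _ hβ.1.ne']
    have hmain := (T1.add T2).div T0 one_ne_zero
    simp only [zero_add, div_one] at hmain
    exact Tendsto.congr' hcongr hmain
  -- composition α ↦ 1 - α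
  have hmap : Tendsto (fun α : ℝ => 1 - α) (𝓝[<] (1:ℝ)) (𝓝[>] (0:ℝ)) := by
    refine tendsto_nhdsWithin_iff.mpr ⟨?_, ?_⟩
    · have h2b : Tendsto (fun α : ℝ => 1 - α) (𝓝 (1:ℝ)) (𝓝 ((1:ℝ) - 1)) :=
        Continuous.tendsto (by continuity) 1
      rw [sub_self] at h2b
      exact h2b.mono_left nhdsWithin_le_nhds
    · filter_upwards [self_mem_nhdsWithin] with α hα
      exact mem_Ioi.mpr (sub_pos.mpr (mem_Iio.mp hα))
  have hfin := key.comp hmap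
  refine Tendsto.congr ?_ hfin
  intro α
  simp only [Function.comp_apply]
  rw [show (1:ℝ) - α - 1 = -α from by ring]
end

section
/- Let (M, K) be a Sonin pair with M, K continuous on (0,∞) and locally integrable at 0, g strictly increasing with continuous nonvanishing derivative on [a, b], and f continuously differentiable on [a, b]. Then (I_{a+,g}^{(M)} (D_{a+,g}^{(K)} f))(x) = f(x) for all x in (a, b], i.e. the second fundamental theorem holds for the RL-type parametric GFD. -/
open Set MeasureTheory Filter intervalIntegral Metric
open scoped Topology Interval

lemma ae_hasDerivAt_primitive (q : ℝ → ℝ) (hq : LocallyIntegrable q volume) (a : ℝ) :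
    ∀ᵐ u ∂(volume : Measure ℝ), HasDerivAt (fun y => ∫ t in a..y, q t) (q u) u := by
  filter_upwards [IsUnifLocDoublingMeasure.ae_tendsto_average_norm_sub volume hq 1] with u hu
  have hint : ∀ c d : ℝ, IntervalIntegrable q volume c d := fun c d =>
    (hq.integrableOn_isCompact isCompact_uIcc).intervalIntegrable
  rw [hasDerivAt_iff_tendsto]
  have key : Tendsto (fun y : ℝ => ⨍ t in closedBall u |y - u|, ‖q t - q u‖) (𝓝[≠] u) (𝓝 0) := by
    refine hu (fun y : ℝ => u) (fun y => |y - u|) ?_ ?_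
    · have h1 : Tendsto (fun y : ℝ => |y - u|) (𝓝[≠] u) (𝓝 0) := by
        apply Tendsto.mono_left _ nhdsWithin_le_nhds
        have : Tendsto (fun y : ℝ => |y - u|) (𝓝 u) (𝓝 |u - u|) :=
          (continuous_abs.comp (continuous_id.sub continuous_const)).continuousAt
        simpa using this
      rw [tendsto_nhdsWithin_iff]
      refine ⟨h1, ?_⟩
      filter_upwards [self_mem_nhdsWithin] with y hy
      simpa [sub_eq_zero] using fun h => hy h
    · filter_upwards with y
      simp [abs_nonneg]
  have bound : ∀ y : ℝ, y ≠ u →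
      ‖y - u‖⁻¹ * ‖(∫ t in a..y, q t) - (∫ t in a..u, q t) - (y - u) • q u‖
        ≤ 2 * ⨍ t in closedBall u |y - u|, ‖q t - q u‖ := by
    intro y hy
    have h1 : (∫ t in a..y, q t) - (∫ t in a..u, q t) = ∫ t in u..y, q t := by
      rw [intervalIntegral.integral_interval_sub_left (hint a y) (hint a u)]
    have h2 : (∫ t in u..y, q t) - (y - u) • q u = ∫ t in u..y, (q t - q u) := by
      rw [intervalIntegral.integral_sub (hint u y) intervalIntegrable_const,
        intervalIntegral.integral_const]
    rw [h1, h2]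
    have h3 : ‖∫ t in u..y, (q t - q u)‖ ≤ ∫ t in Ι u y, ‖q t - q u‖ :=
      intervalIntegral.norm_integral_le_integral_norm_uIoc
    have hsub : Ι u y ⊆ closedBall u |y - u| := by
      intro t ht
      rw [mem_closedBall, Real.dist_eq]
      rcases le_total u y with h | h
      · rw [uIoc_of_le h] at ht
        rw [abs_of_nonneg (by linarith [ht.1.le] : (0:ℝ) ≤ t - u),
          abs_of_nonneg (by linarith : (0:ℝ) ≤ y - u)]
        linarith [ht.2]
      · rw [uIoc_of_ge h] at ht
        rw [abs_of_nonpos (by linarith [ht.2] : t - u ≤ 0),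
          abs_of_nonpos (by linarith : y - u ≤ 0)]
        linarith [ht.1]
    have h4 : (∫ t in Ι u y, ‖q t - q u‖) ≤ ∫ t in closedBall u |y - u|, ‖q t - q u‖ := by
      apply setIntegral_mono_set
      · exact ((hq.integrableOn_isCompact (isCompact_closedBall _ _)).sub
          (integrableOn_const measure_closedBall_lt_top.ne)).norm
      · filter_upwards with t using norm_nonneg _
      · exact HasSubset.Subset.eventuallyLE hsub
    have hr : (0:ℝ) < |y - u| := by
      rw [abs_pos]; exact sub_ne_zero.2 hy
    have havg : ⨍ t in closedBall u |y - u|, ‖q t - q u‖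
        = (2 * |y - u|)⁻¹ * ∫ t in closedBall u |y - u|, ‖q t - q u‖ := by
      rw [setAverage_eq, measureReal_def, Real.volume_closedBall]
      rw [ENNReal.toReal_ofReal (by linarith)]
      simp [smul_eq_mul]
    rw [havg]
    have : ‖y - u‖⁻¹ * ‖∫ t in u..y, (q t - q u)‖
        ≤ ‖y - u‖⁻¹ * ∫ t in closedBall u |y - u|, ‖q t - q u‖ := by
      apply mul_le_mul_of_nonneg_left (le_trans h3 h4) (by positivity)
    refine le_trans this ?_
    rw [Real.norm_eq_abs]
    rw [show (2:ℝ) * ((2 * |y - u|)⁻¹ * ∫ t in closedBall u |y - u|, ‖q t - q u‖)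
      = |y - u|⁻¹ * ∫ t in closedBall u |y - u|, ‖q t - q u‖ by field_simp]
  -- combine
  have h0 : Tendsto (fun y : ℝ => ‖y - u‖⁻¹ *
      ‖(∫ t in a..y, q t) - (∫ t in a..u, q t) - (y - u) • q u‖) (𝓝[≠] u) (𝓝 0) := by
    apply squeeze_zero' (by filter_upwards with y using by positivity)
      (by filter_upwards [self_mem_nhdsWithin] with y hy using bound y hy)
    simpa using key.const_mul 2
  rw [← nhdsNE_sup_pure u, tendsto_sup]
  refine ⟨h0, ?_⟩
  have : ‖u - u‖⁻¹ * ‖((∫ t in a..u, q t) - ∫ t in a..u, q t) - (u - u) • q u‖ = 0 := by simp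
  simp only [tendsto_pure_left, this]
  exact fun s hs => mem_of_mem_nhds hs


lemma triangle_fubini {c d : ℝ} (hcd : c ≤ d) (Φ : ℝ → ℝ → ℝ)
    (hmeas : AEStronglyMeasurable (fun p : ℝ × ℝ => if p.2 ≤ p.1 then Φ p.1 p.2 else 0)
      ((volume.restrict (Ioc c d)).prod (volume.restrict (Ioc c d))))
    (hsect : ∀ u ∈ Ioc c d, IntegrableOn (fun w => Φ u w) (Ioc c u))
    (bnd : ℝ → ℝ) (hbnd : IntegrableOn bnd (Ioc c d))
    (hle : ∀ u ∈ Ioc c d, (∫ w in Ioc c u, ‖Φ u w‖) ≤ bnd u) :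
    ((∫ u in Ioc c d, ∫ w in Ioc c u, Φ u w) = ∫ w in Ioc c d, ∫ u in Ioc w d, Φ u w)
      ∧ IntegrableOn (fun u => ∫ w in Ioc c u, Φ u w) (Ioc c d) := by
  set Ψ : ℝ × ℝ → ℝ := fun p => if p.2 ≤ p.1 then Φ p.1 p.2 else 0 with hΨ
  -- inner rewrite in w
  have inner_w : ∀ u ∈ Ioc c d, (∫ w in Ioc c d, Ψ (u, w)) = ∫ w in Ioc c u, Φ u w := by
    intro u hu
    have : (fun w => Ψ (u, w)) = (Iic u).indicator (fun w => Φ u w) := by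
      funext w
      by_cases h : w ≤ u <;> simp [hΨ, h, Set.indicator_apply, mem_Iic]
    rw [this, setIntegral_indicator measurableSet_Iic]
    congr 1
    rw [Set.Ioc_inter_Iic, min_eq_right hu.2]
  have inner_w_norm : ∀ u ∈ Ioc c d,
      (∫ w in Ioc c d, ‖Ψ (u, w)‖) = ∫ w in Ioc c u, ‖Φ u w‖ := by
    intro u hu
    have : (fun w => ‖Ψ (u, w)‖) = (Iic u).indicator (fun w => ‖Φ u w‖) := by
      funext w
      by_cases h : w ≤ u <;> simp [hΨ, h, Set.indicator_apply, mem_Iic]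
    rw [this, setIntegral_indicator measurableSet_Iic]
    congr 1
    rw [Set.Ioc_inter_Iic, min_eq_right hu.2]
  have inner_u : ∀ w ∈ Ioc c d, (∫ u in Ioc c d, Ψ (u, w)) = ∫ u in Ioc w d, Φ u w := by
    intro w hw
    have : (fun u => Ψ (u, w)) = (Ici w).indicator (fun u => Φ u w) := by
      funext u
      by_cases h : w ≤ u <;> simp [hΨ, h, Set.indicator_apply, mem_Ici]
    rw [this, setIntegral_indicator measurableSet_Ici]
    have hset : Ioc c d ∩ Ici w = Icc w d := by
      ext u
      simp only [mem_inter_iff, mem_Ioc, mem_Ici, mem_Icc]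
      constructor
      · rintro ⟨⟨_, h2⟩, h3⟩; exact ⟨h3, h2⟩
      · rintro ⟨h1, h2⟩; exact ⟨⟨lt_of_lt_of_le hw.1 h1, h2⟩, h1⟩
    rw [hset, integral_Icc_eq_integral_Ioc]
  -- integrability of Ψ
  have hΨint : Integrable Ψ ((volume.restrict (Ioc c d)).prod (volume.restrict (Ioc c d))) := by
    rw [integrable_prod_iff hmeas]
    constructor
    · rw [ae_restrict_iff' measurableSet_Ioc]
      filter_upwards with u hu
      have : (fun w => Ψ (u, w)) = (Iic u).indicator (fun w => Φ u w) := by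
        funext w
        by_cases h : w ≤ u <;> simp [hΨ, h, Set.indicator_apply, mem_Iic]
      rw [this, integrable_indicator_iff measurableSet_Iic]
      rw [IntegrableOn, Measure.restrict_restrict measurableSet_Iic]
      have : Iic u ∩ Ioc c d = Ioc c u := by
        ext w
        simp only [mem_inter_iff, mem_Iic, mem_Ioc]
        constructor
        · rintro ⟨h1, h2, _⟩; exact ⟨h2, h1⟩
        · rintro ⟨h1, h2⟩; exact ⟨h2, h1, le_trans h2 hu.2⟩
      rw [this]
      exact hsect u hu
    · apply Integrable.mono' hbnd (hmeas.norm.integral_prod_right')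
      rw [ae_restrict_iff' measurableSet_Ioc]
      filter_upwards with u hu
      rw [Real.norm_eq_abs, abs_of_nonneg (integral_nonneg (fun w => norm_nonneg _))]
      rw [inner_w_norm u hu]
      exact hle u hu
  have swap := integral_integral_swap (f := fun u w => Ψ (u, w))
    (μ := volume.restrict (Ioc c d)) (ν := volume.restrict (Ioc c d)) (by exact hΨint)
  constructor
  · calc (∫ u in Ioc c d, ∫ w in Ioc c u, Φ u w)
        = ∫ u in Ioc c d, ∫ w in Ioc c d, Ψ (u, w) :=
          (setIntegral_congr_fun measurableSet_Ioc (fun u hu => (inner_w u hu).symm))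
      _ = ∫ w in Ioc c d, ∫ u in Ioc c d, Ψ (u, w) := swap
      _ = ∫ w in Ioc c d, ∫ u in Ioc w d, Φ u w :=
          setIntegral_congr_fun measurableSet_Ioc (fun w hw => inner_u w hw)
  · have := hΨint.integral_prod_left
    apply this.congr
    rw [Filter.EventuallyEq, ae_restrict_iff' measurableSet_Ioc]
    filter_upwards with u hu
    exact (inner_w u hu)


lemma subst_Ioc {g : ℝ → ℝ} {a b : ℝ} (hg : StrictMonoOn g (Icc a b))
    (hgd : ∀ x ∈ Icc a b, HasDerivAt g (deriv g x) x)
    (hgpos : ∀ x ∈ Icc a b, 0 < deriv g x)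
    {c d : ℝ} (hc : a ≤ c) (hcd : c ≤ d) (hd : d ≤ b) (φ : ℝ → ℝ) :
    ((∫ s in Ioc (g c) (g d), φ s) = ∫ u in Ioc c d, deriv g u * φ (g u))
    ∧ (IntegrableOn φ (Ioc (g c) (g d)) ↔
        IntegrableOn (fun u => deriv g u * φ (g u)) (Ioc c d)) := by
  have hsubset : Ioc c d ⊆ Icc a b := fun u hu =>
    ⟨le_trans hc hu.1.le, le_trans hu.2 hd⟩
  have hcI : c ∈ Icc a b := ⟨hc, le_trans hcd hd⟩
  have hdI : d ∈ Icc a b := ⟨le_trans hc hcd, hd⟩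
  have hgc : ContinuousOn g (Icc a b) := fun x hx =>
    (hgd x hx).continuousAt.continuousWithinAt
  have himg : g '' Ioc c d = Ioc (g c) (g d) := by
    apply Subset.antisymm
    · rintro _ ⟨u, hu, rfl⟩
      exact ⟨hg hcI (hsubset hu) hu.1, hg.monotoneOn (hsubset hu) hdI hu.2⟩
    · intro y hy
      have : y ∈ Icc (g c) (g d) := ⟨hy.1.le, hy.2⟩
      obtain ⟨u, hu, rfl⟩ := intermediate_value_Icc hcd (hgc.mono (Icc_subset_Icc hc hd)) this
      refine ⟨u, ⟨?_, hu.2⟩, rfl⟩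
      rcases eq_or_lt_of_le hu.1 with h | h
      · exfalso; rw [← h] at hy; exact lt_irrefl _ hy.1
      · exact h
  have hderiv : ∀ u ∈ Ioc c d, HasDerivWithinAt g (deriv g u) (Ioc c d) u := fun u hu =>
    (hgd u (hsubset hu)).hasDerivWithinAt
  have hinj : InjOn g (Ioc c d) := hg.injOn.mono hsubset
  constructor
  · rw [← himg, integral_image_eq_integral_abs_deriv_smul measurableSet_Ioc hderiv hinj φ]
    apply setIntegral_congr_fun measurableSet_Ioc
    intro u hu
    show |deriv g u| • φ (g u) = deriv g u * φ (g u)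
    rw [abs_of_pos (hgpos u (hsubset hu)), smul_eq_mul]
  · rw [← himg,
      integrableOn_image_iff_integrableOn_abs_deriv_smul measurableSet_Ioc hderiv hinj φ]
    have key : ∀ u ∈ Ioc c d, |deriv g u| • φ (g u) = deriv g u * φ (g u) := fun u hu => by
      rw [abs_of_pos (hgpos u (hsubset hu)), smul_eq_mul]
    constructor
    · intro h; exact h.congr_fun key measurableSet_Ioc
    · intro h; exact h.congr_fun (fun u hu => (key u hu).symm) measurableSet_Ioc


theorem aux_FT (M K : ℝ → ℝ) (hMm : Measurable M) (hKm : Measurable K)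
    (hSonin : ∀ x : ℝ, 0 < x → (∫ z in (0 : ℝ)..x, M (x - z) * K z) = 1)
    (hMc : ContinuousOn M (Ioi 0)) (hKc : ContinuousOn K (Ioi 0))
    (hMi : ∀ T > 0, IntervalIntegrable M volume 0 T)
    (hKi : ∀ T > 0, IntervalIntegrable K volume 0 T)
    (a b : ℝ) (hab : a < b) (g : ℝ → ℝ)
    (hg : StrictMonoOn g (Icc a b))
    (hgd : ∀ x ∈ Icc a b, HasDerivAt g (deriv g x) x)
    (hg' : ContinuousOn (deriv g) (Icc a b))
    (hg0 : ∀ x ∈ Icc a b, deriv g x ≠ 0)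
    (f : ℝ → ℝ) (hf : ContDiffOn ℝ 1 f (Icc a b)) :
    ∀ x ∈ Ioc a b,
      (∫ u in a..x,
        M (g x - g u) *
          ((1 / deriv g u) *
            deriv (fun y => ∫ v in a..y, K (g y - g v) * f v * deriv g v) u) *
          deriv g u)
        = f x := by
  intro x hx
  have hax : a < x := hx.1
  have hxb : x ≤ b := hx.2
  have hxI : x ∈ Icc a b := ⟨hax.le, hxb⟩
  have haI : a ∈ Icc a b := ⟨le_rfl, hab.le⟩
  have hbI : b ∈ Icc a b := ⟨hab.le, le_rfl⟩
  have hab' : a ≤ b := hab.le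
  have hgc : ContinuousOn g (Icc a b) := fun u hu =>
    (hgd u hu).continuousAt.continuousWithinAt
  -- positivity of deriv g
  have hgpos : ∀ u ∈ Icc a b, 0 < deriv g u := by
    intro u hu
    rcases lt_or_gt_of_ne (hg0 u hu) with hneg | hpos
    · exfalso
      have hall : ∀ z ∈ Icc a b, deriv g z < 0 := by
        intro z hz
        rcases lt_or_gt_of_ne (hg0 z hz) with h | h
        · exact h
        · exfalso
          have hIcc : uIcc u z ⊆ Icc a b := uIcc_subset_Icc hu hz
          have : (0:ℝ) ∈ uIcc (deriv g u) (deriv g z) := by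
            rw [mem_uIcc]; left; exact ⟨hneg.le, h.le⟩
          obtain ⟨z₀, hz₀, hz₀0⟩ := intermediate_value_uIcc (hg'.mono hIcc) this
          exact hg0 z₀ (hIcc hz₀) hz₀0
      have : StrictAntiOn g (Icc a b) := by
        apply strictAntiOn_of_deriv_neg (convex_Icc a b) hgc
        intro z hz
        rw [interior_Icc] at hz
        exact hall z ⟨hz.1.le, hz.2.le⟩
      have h1 := this ⟨le_rfl, hab'⟩ ⟨hab', le_rfl⟩ hab
      have h2 := hg ⟨le_rfl, hab'⟩ ⟨hab', le_rfl⟩ hab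
      linarith
    · exact hpos
  -- clamped versions
  set clamp : ℝ → ℝ := fun u => max a (min b u) with hclamp
  have hclampc : Continuous clamp := continuous_const.max (continuous_const.min continuous_id)
  have hclampmem : ∀ u, clamp u ∈ Icc a b := fun u =>
    ⟨le_max_left _ _, max_le hab' (min_le_left _ _)⟩
  have hclampeq : ∀ u ∈ Icc a b, clamp u = u := by
    intro u hu
    rw [hclamp]
    simp only [min_eq_right hu.2, max_eq_right hu.1]
  set G : ℝ → ℝ := fun u => g (clamp u) with hG
  set P : ℝ → ℝ := fun u => deriv g (clamp u) with hP
  set f₁ : ℝ → ℝ := fun u => derivWithin f (Icc a b) (clamp u) with hf₁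
  have hGeq : ∀ u ∈ Icc a b, G u = g u := fun u hu => by rw [hG]; simp [hclampeq u hu]
  have hPeq : ∀ u ∈ Icc a b, P u = deriv g u := fun u hu => by rw [hP]; simp [hclampeq u hu]
  have hGc : Continuous G := hgc.comp_continuous hclampc hclampmem
  have hPc : Continuous P := hg'.comp_continuous hclampc hclampmem
  have hPpos : ∀ u, 0 < P u := fun u => hgpos _ (hclampmem u)
  have hf₁c : Continuous f₁ :=
    (hf.continuousOn_derivWithin (uniqueDiffOn_Icc hab) le_rfl).comp_continuous hclampc hclampmem
  -- derivative of f
  have hdf : ∀ t ∈ Ioo a b, HasDerivAt f (f₁ t) t := by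
    intro t ht
    have h1 : HasDerivWithinAt f (derivWithin f (Icc a b) t) (Icc a b) t :=
      ((hf.differentiableOn one_ne_zero) t ⟨ht.1.le, ht.2.le⟩).hasDerivWithinAt
    have h2 := h1.hasDerivAt (Icc_mem_nhds ht.1 ht.2)
    have : f₁ t = derivWithin f (Icc a b) t := by
      rw [hf₁]; simp [hclampeq t ⟨ht.1.le, ht.2.le⟩]
    rw [this]
    exact h2
  have hf₁int : ∀ c d : ℝ, IntervalIntegrable f₁ volume c d :=
    fun c d => hf₁c.intervalIntegrable c d
  -- FTC for f
  have hFTC : ∀ v ∈ Icc a b, f v = f a + ∫ t in Ioc a v, f₁ t := by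
    intro v hv
    have := intervalIntegral.integral_eq_sub_of_hasDeriv_right_of_le hv.1
      (hf.continuousOn.mono (Icc_subset_Icc le_rfl hv.2))
      (fun t ht => (hdf t ⟨ht.1, lt_of_lt_of_le ht.2 hv.2⟩).hasDerivWithinAt)
      (hf₁int a v)
    rw [intervalIntegral.integral_of_le hv.1] at this
    linarith [this]
  -- abbreviations
  set A := g a with hA
  set X := g x with hX
  set BB := g b with hBB
  have hABB : A < BB := hg haI hbI hab
  have hAX : A < X := hg haI hxI hax
  have hXBB : X ≤ BB := hg.monotoneOn hxI hbI hxb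
  set Kf : ℝ → ℝ := fun r => ∫ z in (0:ℝ)..r, K z with hKf
  set KA : ℝ := ∫ z in Ioc (0:ℝ) (BB - A), |K z| with hKA
  have hKint : IntegrableOn (fun z => |K z|) (Ioc 0 (BB - A)) :=
    (intervalIntegrable_iff_integrableOn_Ioc_of_le (by linarith)).1 (hKi _ (by linarith)).norm
  -- key substitution identities
  have Hsub : ∀ w y : ℝ, a ≤ w → w < y → y ≤ b →
      ((∫ u in Ioc w y, P u * K (g y - G u)) = Kf (g y - g w)) ∧
      IntegrableOn (fun u => P u * K (g y - G u)) (Ioc w y) ∧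
      ((∫ u in Ioc w y, P u * |K (g y - G u)|) ≤ KA) := by
    intro w y hw hwy hyb
    have hwI : w ∈ Icc a b := ⟨hw, hwy.le.trans hyb⟩
    have hyI : y ∈ Icc a b := ⟨hw.trans hwy.le, hyb⟩
    have hgwy : g w < g y := hg hwI hyI hwy
    have hmemIcc : ∀ u ∈ Ioc w y, u ∈ Icc a b := fun u hu =>
      ⟨hw.trans hu.1.le, hu.2.trans hyb⟩
    have hKK : IntervalIntegrable (fun s => K (g y - s)) volume (g w) (g y) := by
      have h0 : IntervalIntegrable K volume 0 (g y - g w) := hKi _ (by linarith)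
      have h1 := h0.comp_sub_left (g y)
      simpa using h1.symm
    constructor
    · have h1 := (subst_Ioc hg hgd hgpos hw hwy.le hyb (fun s => K (g y - s))).1
      have h2 : ∀ u ∈ Ioc w y,
          deriv g u * (fun s => K (g y - s)) (g u) = P u * K (g y - G u) := by
        intro u hu
        rw [hPeq u (hmemIcc u hu), hGeq u (hmemIcc u hu)]
      rw [setIntegral_congr_fun measurableSet_Ioc h2] at h1
      rw [← h1, ← intervalIntegral.integral_of_le hgwy.le,
        intervalIntegral.integral_comp_sub_left K (g y), sub_self, hKf]
    constructor
    · have h3 := (subst_Ioc hg hgd hgpos hw hwy.le hyb (fun s => K (g y - s))).2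
      have h4 : IntegrableOn (fun s => K (g y - s)) (Ioc (g w) (g y)) :=
        (intervalIntegrable_iff_integrableOn_Ioc_of_le hgwy.le).1 hKK
      exact (h3.1 h4).congr_fun (fun u hu => by
        rw [hPeq u (hmemIcc u hu), hGeq u (hmemIcc u hu)]) measurableSet_Ioc
    · have h1 := (subst_Ioc hg hgd hgpos hw hwy.le hyb (fun s => |K (g y - s)|)).1
      have h2 : ∀ u ∈ Ioc w y,
          deriv g u * (fun s => |K (g y - s)|) (g u) = P u * |K (g y - G u)| := by
        intro u hu
        rw [hPeq u (hmemIcc u hu), hGeq u (hmemIcc u hu)]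
      rw [setIntegral_congr_fun measurableSet_Ioc h2] at h1
      rw [← h1, ← intervalIntegral.integral_of_le hgwy.le,
        intervalIntegral.integral_comp_sub_left (fun z => |K z|) (g y), sub_self,
        intervalIntegral.integral_of_le (by linarith : (0:ℝ) ≤ g y - g w)]
      apply setIntegral_mono_set hKint
      · filter_upwards with z using abs_nonneg _
      · apply HasSubset.Subset.eventuallyLE
        apply Ioc_subset_Ioc le_rfl
        have h5 : g y ≤ BB := hg.monotoneOn hyI hbI hyb
        have h6 : A ≤ g w := hg.monotoneOn haI hwI hw
        linarith
  have Hsub' : ∀ w y : ℝ, a ≤ w → w < y → y ≤ b →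
      ((∫ t in Ioc w y, P t * K (G t - g w)) = Kf (g y - g w)) ∧
      IntegrableOn (fun t => P t * K (G t - g w)) (Ioc w y) := by
    intro w y hw hwy hyb
    have hwI : w ∈ Icc a b := ⟨hw, hwy.le.trans hyb⟩
    have hyI : y ∈ Icc a b := ⟨hw.trans hwy.le, hyb⟩
    have hgwy : g w < g y := hg hwI hyI hwy
    have hmemIcc : ∀ u ∈ Ioc w y, u ∈ Icc a b := fun u hu =>
      ⟨hw.trans hu.1.le, hu.2.trans hyb⟩
    have hKK : IntervalIntegrable (fun s => K (s - g w)) volume (g w) (g y) := by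
      have h0 : IntervalIntegrable K volume 0 (g y - g w) := hKi _ (by linarith)
      have h1 := h0.comp_sub_right (g w)
      simpa using h1
    constructor
    · have h1 := (subst_Ioc hg hgd hgpos hw hwy.le hyb (fun s => K (s - g w))).1
      have h2 : ∀ u ∈ Ioc w y,
          deriv g u * (fun s => K (s - g w)) (g u) = P u * K (G u - g w) := by
        intro u hu
        rw [hPeq u (hmemIcc u hu), hGeq u (hmemIcc u hu)]
      rw [setIntegral_congr_fun measurableSet_Ioc h2] at h1
      rw [← h1, ← intervalIntegral.integral_of_le hgwy.le,
        intervalIntegral.integral_comp_sub_right K (g w), sub_self, hKf]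
    · have h3 := (subst_Ioc hg hgd hgpos hw hwy.le hyb (fun s => K (s - g w))).2
      have h4 : IntegrableOn (fun s => K (s - g w)) (Ioc (g w) (g y)) :=
        (intervalIntegrable_iff_integrableOn_Ioc_of_le hgwy.le).1 hKK
      exact (h3.1 h4).congr_fun (fun u hu => by
        rw [hPeq u (hmemIcc u hu), hGeq u (hmemIcc u hu)]) measurableSet_Ioc
  -- Sonin integrability
  have HQ : ∀ c : ℝ, 0 < c → IntegrableOn (fun z => M (c - z) * K z) (Ioc 0 c) ∧
      (∫ z in Ioc 0 c, M (c - z) * K z) = 1 := by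
    intro c hc
    have h := hSonin c hc
    have hii : IntervalIntegrable (fun z => M (c - z) * K z) volume 0 c := by
      by_contra hn
      rw [intervalIntegral.integral_undef hn] at h
      norm_num at h
    refine ⟨(intervalIntegrable_iff_integrableOn_Ioc_of_le hc.le).1 hii, ?_⟩
    rw [← intervalIntegral.integral_of_le hc.le]
    exact h
  have HMK : ∀ w : ℝ, a ≤ w → w < x →
      ((∫ u in Ioc w x, P u * (M (X - G u) * K (G u - g w))) = 1) ∧
      IntegrableOn (fun u => P u * (M (X - G u) * K (G u - g w))) (Ioc w x) := by
    intro w hw hwx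
    have hwI : w ∈ Icc a b := ⟨hw, hwx.le.trans hxb⟩
    have hgwX : g w < X := hg hwI hxI hwx
    have hmemIcc : ∀ u ∈ Ioc w x, u ∈ Icc a b := fun u hu =>
      ⟨hw.trans hu.1.le, hu.2.trans hxb⟩
    set c := X - g w with hc
    have hcpos : 0 < c := by rw [hc]; linarith
    set f0 : ℝ → ℝ := fun z => M (c - z) * K z with hf0
    have hphi : ∀ s, (fun s => M (X - s) * K (s - g w)) s = f0 (s - g w) := by
      intro s
      rw [hf0]
      simp only []
      congr 2
      rw [hc]; ring
    have hii : IntervalIntegrable (fun s => M (X - s) * K (s - g w)) volume (g w) X := by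
      have h0 : IntervalIntegrable f0 volume 0 c :=
        (intervalIntegrable_iff_integrableOn_Ioc_of_le hcpos.le).2 (HQ c hcpos).1
      have h1 := h0.comp_sub_right (g w)
      have h2 : IntervalIntegrable (fun s => f0 (s - g w)) volume (g w) X := by
        have e1 : (0:ℝ) + g w = g w := by ring
        have e2 : c + g w = X := by rw [hc]; ring
        rwa [e1, e2] at h1
      exact (funext hphi : (fun s => M (X - s) * K (s - g w)) = fun s => f0 (s - g w)) ▸ h2
    constructor
    · have h1 := (subst_Ioc hg hgd hgpos hw hwx.le hxb (fun s => M (X - s) * K (s - g w))).1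
      have h2 : ∀ u ∈ Ioc w x,
          deriv g u * (fun s => M (X - s) * K (s - g w)) (g u)
            = P u * (M (X - G u) * K (G u - g w)) := by
        intro u hu
        rw [hPeq u (hmemIcc u hu), hGeq u (hmemIcc u hu)]
      rw [setIntegral_congr_fun measurableSet_Ioc h2] at h1
      rw [← h1, ← intervalIntegral.integral_of_le hgwX.le]
      have h3 : (∫ s in (g w)..X, M (X - s) * K (s - g w))
          = ∫ s in (g w)..X, f0 (s - g w) := by
        apply intervalIntegral.integral_congr
        intro s _
        exact hphi s
      rw [h3, intervalIntegral.integral_comp_sub_right f0 (g w), sub_self]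
      have e2 : X - g w = c := rfl
      rw [e2, intervalIntegral.integral_of_le hcpos.le]
      exact (HQ c hcpos).2
    · have h3 := (subst_Ioc hg hgd hgpos hw hwx.le hxb (fun s => M (X - s) * K (s - g w))).2
      have h4 : IntegrableOn (fun s => M (X - s) * K (s - g w)) (Ioc (g w) X) :=
        (intervalIntegrable_iff_integrableOn_Ioc_of_le hgwX.le).1 hii
      exact (h3.1 h4).congr_fun (fun u hu => by
        rw [hPeq u (hmemIcc u hu), hGeq u (hmemIcc u hu)]) measurableSet_Ioc
  have HsubM : IntegrableOn (fun u => P u * |M (X - G u)|) (Ioc a x) := by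
    have h4 : IntegrableOn (fun s => |M (X - s)|) (Ioc A X) := by
      have h0 := ((hMi _ (by linarith : (0:ℝ) < X - A)).comp_sub_left X).norm
      have : IntervalIntegrable (fun s => ‖M (X - s)‖) volume A X := by
        simpa using h0.symm
      simpa [Real.norm_eq_abs] using
        (intervalIntegrable_iff_integrableOn_Ioc_of_le hAX.le).1 this
    have h3 := (subst_Ioc hg hgd hgpos le_rfl hax.le hxb (fun s => |M (X - s)|)).2
    exact (h3.1 h4).congr_fun (fun u hu => by
      rw [hPeq u ⟨hu.1.le, hu.2.trans hxb⟩, hGeq u ⟨hu.1.le, hu.2.trans hxb⟩]) measurableSet_Ioc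
  -- bounds
  obtain ⟨C, hC0⟩ := isCompact_Icc.exists_bound_of_continuousOn
    (hf.continuousOn_derivWithin (uniqueDiffOn_Icc hab) le_rfl)
  have hC : ∀ u, |f₁ u| ≤ C := fun u => by
    rw [hf₁]
    simpa [Real.norm_eq_abs] using hC0 (clamp u) (hclampmem u)
  have hCpos : 0 ≤ C := le_trans (abs_nonneg _) (hC a)
  set rho : ℝ → ℝ := fun u => f₁ u / P u with hrho
  have hrhoc : Continuous rho := hf₁c.div hPc (fun u => (hPpos u).ne')
  obtain ⟨Cr, hCr0⟩ := isCompact_Icc.exists_bound_of_continuousOn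
    (hrhoc.continuousOn (s := Icc a b))
  have hclampidem : ∀ u, clamp (clamp u) = clamp u := fun u => hclampeq _ (hclampmem u)
  have hCr : ∀ u, |rho u| ≤ Cr := fun u => by
    have h1 : rho (clamp u) = rho u := by
      rw [hrho]; simp only [hf₁, hP, hclampidem u]
    rw [← h1]
    simpa [Real.norm_eq_abs] using hCr0 (clamp u) (hclampmem u)
  have hCrpos : 0 ≤ Cr := le_trans (abs_nonneg _) (hCr a)
  have hrhoeq : ∀ u, f₁ u = rho u * P u := fun u => by
    rw [hrho, div_mul_cancel₀ _ (hPpos u).ne']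
  have hKA0 : 0 ≤ KA := setIntegral_nonneg measurableSet_Ioc (fun z _ => abs_nonneg _)
  -- a.e. avoid a point
  have hae_ne : ∀ y : ℝ, ∀ᵐ w : ℝ ∂volume, w ≠ y := by
    intro y
    rw [ae_iff]
    have : {w : ℝ | ¬ w ≠ y} = {y} := by ext w; simp [not_not]
    rw [this, measure_singleton]
  -- primitive of f₁
  have hprim_cont : Continuous (fun v => ∫ t in a..v, f₁ t) :=
    intervalIntegral.continuous_primitive hf₁int a
  have hprim_eq : ∀ v, a ≤ v → (∫ w in Ioc a v, f₁ w) = ∫ t in a..v, f₁ t :=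
    fun v hv => (intervalIntegral.integral_of_le hv).symm
  have habsf₁ : ∀ v ∈ Icc a b, (∫ w in Ioc a v, |f₁ w|) ≤ C * (b - a) := by
    intro v hv
    have h2 : (∫ w in Ioc a v, |f₁ w|) ≤ ∫ w in Ioc a v, C := by
      apply setIntegral_mono_on (hf₁c.norm.integrableOn_Ioc) (integrableOn_const (ne_of_lt ?_))
        measurableSet_Ioc (fun w _ => hC w)
      rw [Real.volume_Ioc]
      exact ENNReal.ofReal_lt_top
    have h3 : (∫ w in Ioc a v, (C:ℝ)) = C * (v - a) := by
      rw [setIntegral_const, measureReal_def, Real.volume_Ioc, smul_eq_mul,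
        ENNReal.toReal_ofReal (by linarith [hv.1])]
      ring
    calc (∫ w in Ioc a v, |f₁ w|) ≤ C * (v - a) := by rw [← h3]; exact h2
      _ ≤ C * (b - a) := by nlinarith [hv.2, hv.1]
  have hprim_bdd : ∀ v ∈ Icc a b, |∫ w in Ioc a v, f₁ w| ≤ C * (b - a) := by
    intro v hv
    have h1 : |∫ w in Ioc a v, f₁ w| ≤ ∫ w in Ioc a v, |f₁ w| := by
      simpa [Real.norm_eq_abs] using
        norm_integral_le_integral_norm (μ := volume.restrict (Ioc a v)) f₁
    exact h1.trans (habsf₁ v hv)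
  -- the key identity (★)
  have hstar : ∀ y ∈ Icc a b, (∫ v in a..y, K (g y - g v) * f v * deriv g v)
      = f a * Kf (g y - A) + ∫ w in Ioc a y, Kf (g y - G w) * f₁ w := by
    intro y hy
    rcases eq_or_lt_of_le hy.1 with heq | hay
    · rw [← heq]
      have h0 : Kf 0 = 0 := by rw [hKf]; simp
      simp [hA, h0]
    · have hmem : ∀ v ∈ Ioc a y, v ∈ Icc a b := fun v hv => ⟨hv.1.le, hv.2.trans hy.2⟩
      have hHs := Hsub a y le_rfl hay hy.2
      have hsplit : ∀ v ∈ Ioc a y,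
          K (g y - g v) * f v * deriv g v
            = (P v * K (g y - G v)) * f a
              + ((P v * K (g y - G v)) * ∫ w in Ioc a v, f₁ w) := by
        intro v hv
        rw [← hPeq v (hmem v hv), ← hGeq v (hmem v hv), hFTC v (hmem v hv)]
        ring
      have int1 : IntegrableOn (fun v => (P v * K (g y - G v)) * f a) (Ioc a y) :=
        hHs.2.1.mul_const _
      have normPK : (fun v => ‖P v * K (g y - G v)‖) = fun v => P v * |K (g y - G v)| :=
        funext fun v => by
          rw [Real.norm_eq_abs, abs_mul, abs_of_pos (hPpos v)]
      have intPKabs : IntegrableOn (fun v => P v * |K (g y - G v)|) (Ioc a y) :=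
        normPK ▸ hHs.2.1.norm
      have int2 : IntegrableOn
          (fun v => (P v * K (g y - G v)) * ∫ w in Ioc a v, f₁ w) (Ioc a y) := by
        apply Integrable.mono' (intPKabs.mul_const (C * (b - a)))
        · apply AEStronglyMeasurable.mul
          · exact ((hPc.measurable.mul
              (hKm.comp (measurable_const.sub hGc.measurable)))).aestronglyMeasurable
          · apply (hprim_cont.aestronglyMeasurable.restrict).congr
            rw [Filter.EventuallyEq, ae_restrict_iff' measurableSet_Ioc]
            filter_upwards with v hv
            exact (hprim_eq v hv.1.le).symm
        · rw [ae_restrict_iff' measurableSet_Ioc]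
          filter_upwards with v hv
          rw [norm_mul, Real.norm_eq_abs (P v * K (g y - G v)), abs_mul,
            abs_of_pos (hPpos v), Real.norm_eq_abs]
          exact mul_le_mul_of_nonneg_left (hprim_bdd v (hmem v hv))
            (mul_nonneg (hPpos v).le (abs_nonneg _))
      have e1 : (∫ v in a..y, K (g y - g v) * f v * deriv g v)
          = ∫ v in Ioc a y, ((P v * K (g y - G v)) * f a
              + ((P v * K (g y - G v)) * ∫ w in Ioc a v, f₁ w)) := by
        rw [intervalIntegral.integral_of_le hay.le]
        exact setIntegral_congr_fun measurableSet_Ioc hsplit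
      rw [e1, integral_add int1 int2]
      congr 1
      · rw [MeasureTheory.integral_mul_const, hHs.1, hA, mul_comm]
      · set ΦA : ℝ → ℝ → ℝ := fun v w => (P v * K (g y - G v)) * f₁ w with hΦA
        have hmeasA : AEStronglyMeasurable
            (fun p : ℝ × ℝ => if p.2 ≤ p.1 then ΦA p.1 p.2 else 0)
            ((volume.restrict (Ioc a y)).prod (volume.restrict (Ioc a y))) := by
          apply Measurable.aestronglyMeasurable
          apply Measurable.ite (measurableSet_le measurable_snd measurable_fst)
          · exact (((hPc.measurable.comp measurable_fst).mul
              (hKm.comp (measurable_const.sub (hGc.measurable.comp measurable_fst))))).mul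
              (hf₁c.measurable.comp measurable_snd)
          · exact measurable_const
        have hsectA : ∀ u ∈ Ioc a y, IntegrableOn (fun w => ΦA u w) (Ioc a u) := fun u hu =>
          (hf₁c.integrableOn_Ioc).const_mul _
        have hbndA : IntegrableOn
            (fun v => (P v * |K (g y - G v)|) * (C * (b - a))) (Ioc a y) :=
          intPKabs.mul_const _
        have hleA : ∀ u ∈ Ioc a y, (∫ w in Ioc a u, ‖ΦA u w‖)
            ≤ (P u * |K (g y - G u)|) * (C * (b - a)) := by
          intro u hu
          have h1 : ∀ w, ‖ΦA u w‖ = (P u * |K (g y - G u)|) * |f₁ w| := fun w => by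
            rw [hΦA]
            simp only []
            rw [norm_mul, Real.norm_eq_abs (P u * K (g y - G u)), abs_mul,
              abs_of_pos (hPpos u), Real.norm_eq_abs]
          calc (∫ w in Ioc a u, ‖ΦA u w‖)
              = (P u * |K (g y - G u)|) * ∫ w in Ioc a u, |f₁ w| := by
                simp_rw [h1]
                rw [MeasureTheory.integral_const_mul]
            _ ≤ (P u * |K (g y - G u)|) * (C * (b - a)) :=
                mul_le_mul_of_nonneg_left (habsf₁ u (hmem u hu))
                  (mul_nonneg (hPpos u).le (abs_nonneg _))
        have hfubA := triangle_fubini hay.le ΦA hmeasA hsectA _ hbndA hleA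
        have eL : (∫ v in Ioc a y, (P v * K (g y - G v)) * ∫ w in Ioc a v, f₁ w)
            = ∫ v in Ioc a y, ∫ w in Ioc a v, ΦA v w :=
          setIntegral_congr_fun measurableSet_Ioc (fun v hv => (MeasureTheory.integral_const_mul _ _).symm)
        have eR : (∫ w in Ioc a y, ∫ v in Ioc w y, ΦA v w)
            = ∫ w in Ioc a y, Kf (g y - G w) * f₁ w := by
          apply setIntegral_congr_ae measurableSet_Ioc
          filter_upwards [hae_ne y] with w hwne hw
          have hwy : w < y := lt_of_le_of_ne hw.2 hwne
          rw [show (fun v => ΦA v w) = fun v => (P v * K (g y - G v)) * f₁ w from rfl,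
            MeasureTheory.integral_mul_const, (Hsub w y hw.1.le hwy hy.2).1,
            hGeq w ⟨hw.1.le, hw.2.trans hy.2⟩]
        rw [eL, hfubA.1, eR]
  -- the inner kernel function q and Fubini for it
  set ΦB : ℝ → ℝ → ℝ := fun t w => (P t * K (G t - G w)) * f₁ w with hΦB
  set q : ℝ → ℝ := fun t => ∫ w in Ioc a t, ΦB t w with hq
  have hmeasB : ∀ S : Set ℝ, MeasurableSet S → AEStronglyMeasurable
      (fun p : ℝ × ℝ => if p.2 ≤ p.1 then ΦB p.1 p.2 else 0)
      ((volume.restrict S).prod (volume.restrict S)) := by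
    intro S hS
    apply Measurable.aestronglyMeasurable
    apply Measurable.ite (measurableSet_le measurable_snd measurable_fst)
    · exact (((hPc.measurable.comp measurable_fst).mul
        (hKm.comp ((hGc.measurable.comp measurable_fst).sub
          (hGc.measurable.comp measurable_snd))))).mul
        (hf₁c.measurable.comp measurable_snd)
    · exact measurable_const
  have hsectB : ∀ t ∈ Ioc a b, IntegrableOn (fun w => ΦB t w) (Ioc a t) := by
    intro t ht
    have htI : t ∈ Icc a b := ⟨ht.1.le, ht.2⟩
    have hHs := Hsub a t le_rfl ht.1 ht.2
    have normPK : (fun w => ‖P w * K (g t - G w)‖) = fun w => P w * |K (g t - G w)| :=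
      funext fun w => by rw [Real.norm_eq_abs, abs_mul, abs_of_pos (hPpos w)]
    have intabs : IntegrableOn (fun w => P w * |K (g t - G w)|) (Ioc a t) :=
      normPK ▸ hHs.2.1.norm
    apply Integrable.mono' (intabs.const_mul (P t * Cr))
    · exact (((measurable_const.mul (hKm.comp (measurable_const.sub
        hGc.measurable)))).mul hf₁c.measurable).aestronglyMeasurable.restrict
    · rw [ae_restrict_iff' measurableSet_Ioc]
      filter_upwards with w hw
      rw [hΦB]
      simp only []
      rw [norm_mul, Real.norm_eq_abs (P t * K (G t - G w)), abs_mul,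
        abs_of_pos (hPpos t), Real.norm_eq_abs, hGeq t htI]
      calc P t * |K (g t - G w)| * |f₁ w|
          = P t * |K (g t - G w)| * (|rho w| * P w) := by
            rw [hrhoeq w, abs_mul, abs_of_pos (hPpos w)]
        _ ≤ P t * |K (g t - G w)| * (Cr * P w) := by
            apply mul_le_mul_of_nonneg_left _ (mul_nonneg (hPpos t).le (abs_nonneg _))
            exact mul_le_mul_of_nonneg_right (hCr w) (hPpos w).le
        _ = P t * Cr * (P w * |K (g t - G w)|) := by ring
  have hleB : ∀ y ∈ Icc a b, ∀ t ∈ Ioc a y,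
      (∫ w in Ioc a t, ‖ΦB t w‖) ≤ P t * (Cr * KA) := by
    intro y hy t ht
    have htI : t ∈ Icc a b := ⟨ht.1.le, ht.2.trans hy.2⟩
    have htb : t ∈ Ioc a b := ⟨ht.1, ht.2.trans hy.2⟩
    have hHs := Hsub a t le_rfl ht.1 htI.2
    have normPK : (fun w => ‖P w * K (g t - G w)‖) = fun w => P w * |K (g t - G w)| :=
      funext fun w => by rw [Real.norm_eq_abs, abs_mul, abs_of_pos (hPpos w)]
    have intabs : IntegrableOn (fun w => P w * |K (g t - G w)|) (Ioc a t) :=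
      normPK ▸ hHs.2.1.norm
    have step1 : (∫ w in Ioc a t, ‖ΦB t w‖)
        ≤ ∫ w in Ioc a t, (P t * Cr) * (P w * |K (g t - G w)|) := by
      apply setIntegral_mono_on (hsectB t htb).norm (intabs.const_mul _) measurableSet_Ioc
      intro w hw
      rw [hΦB]
      simp only []
      rw [norm_mul, Real.norm_eq_abs (P t * K (G t - G w)), abs_mul,
        abs_of_pos (hPpos t), Real.norm_eq_abs, hGeq t htI]
      calc P t * |K (g t - G w)| * |f₁ w|
          = P t * |K (g t - G w)| * (|rho w| * P w) := by
            rw [hrhoeq w, abs_mul, abs_of_pos (hPpos w)]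
        _ ≤ P t * |K (g t - G w)| * (Cr * P w) := by
            apply mul_le_mul_of_nonneg_left _ (mul_nonneg (hPpos t).le (abs_nonneg _))
            exact mul_le_mul_of_nonneg_right (hCr w) (hPpos w).le
        _ = P t * Cr * (P w * |K (g t - G w)|) := by ring
    have step2 : (∫ w in Ioc a t, (P t * Cr) * (P w * |K (g t - G w)|))
        = (P t * Cr) * ∫ w in Ioc a t, P w * |K (g t - G w)| := MeasureTheory.integral_const_mul _ _
    have step3 : (∫ w in Ioc a t, P w * |K (g t - G w)|) ≤ KA := hHs.2.2
    calc (∫ w in Ioc a t, ‖ΦB t w‖) ≤ (P t * Cr) * ∫ w in Ioc a t, P w * |K (g t - G w)| := by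
          rw [← step2]; exact step1
      _ ≤ (P t * Cr) * KA :=
          mul_le_mul_of_nonneg_left step3 (mul_nonneg (hPpos t).le hCrpos)
      _ = P t * (Cr * KA) := by ring
  have hbndB : ∀ y, IntegrableOn (fun t => P t * (Cr * KA)) (Ioc a y) :=
    fun y => (hPc.integrableOn_Ioc).mul_const _
  -- (★★)
  have hstar2 : ∀ y ∈ Icc a b, (∫ w in Ioc a y, Kf (g y - G w) * f₁ w)
      = ∫ t in Ioc a y, q t := by
    intro y hy
    rcases eq_or_lt_of_le hy.1 with heq | hay
    · rw [← heq]; simp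
    · have hfubB := triangle_fubini hay.le ΦB (hmeasB _ measurableSet_Ioc)
        (fun t ht => hsectB t ⟨ht.1, ht.2.trans hy.2⟩) _ (hbndB y) (hleB y hy)
      have eL : (∫ t in Ioc a y, q t) = ∫ t in Ioc a y, ∫ w in Ioc a t, ΦB t w := rfl
      have eR : (∫ w in Ioc a y, ∫ t in Ioc w y, ΦB t w)
          = ∫ w in Ioc a y, Kf (g y - G w) * f₁ w := by
        apply setIntegral_congr_ae measurableSet_Ioc
        filter_upwards [hae_ne y] with w hwne hw
        have hwy : w < y := lt_of_le_of_ne hw.2 hwne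
        have hwI : w ∈ Icc a b := ⟨hw.1.le, hw.2.trans hy.2⟩
        have e0 : (fun t => ΦB t w) = fun t => (P t * K (G t - g w)) * f₁ w := by
          funext t
          simp only [hΦB]
          rw [hGeq w hwI]
        rw [e0, MeasureTheory.integral_mul_const, (Hsub' w y hw.1.le hwy hy.2).1, hGeq w hwI]
      rw [eL, hfubB.1, eR]
  -- q is integrable, build the global kernel qt
  have hqint : IntegrableOn q (Ioc a b) :=
    (triangle_fubini hab' ΦB (hmeasB _ measurableSet_Ioc) hsectB _ (hbndB b)
      (hleB b hbI)).2
  set qt : ℝ → ℝ := (Ioc a b).indicator q with hqt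
  have hqtloc : LocallyIntegrable qt volume :=
    ((integrable_indicator_iff measurableSet_Ioc).2 hqint).locallyIntegrable
  have hqt_eq : ∀ t ∈ Ioc a b, qt t = q t := fun t ht => indicator_of_mem ht q
  have hae := ae_hasDerivAt_primitive qt hqtloc a
  -- the nice version of the inner function
  set Fn : ℝ → ℝ := fun y => f a * Kf (g y - A) + ∫ t in a..y, qt t with hFn
  have hFn_eq : ∀ y ∈ Ioo a b, (∫ v in a..y, K (g y - g v) * f v * deriv g v) = Fn y := by
    intro y hy
    have hyI : y ∈ Icc a b := ⟨hy.1.le, hy.2.le⟩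
    rw [hstar y hyI, hstar2 y hyI, hFn]
    congr 1
    rw [intervalIntegral.integral_of_le hy.1.le]
    apply setIntegral_congr_fun measurableSet_Ioc
    intro t ht
    exact (hqt_eq t ⟨ht.1, ht.2.trans hy.2.le⟩).symm
  -- derivative of the first summand of Fn
  have hKf_deriv : ∀ u ∈ Ioo a b,
      HasDerivAt (fun y => f a * Kf (g y - A)) (f a * (K (g u - A) * deriv g u)) u := by
    intro u hu
    have huI : u ∈ Icc a b := ⟨hu.1.le, hu.2.le⟩
    have hpos : 0 < g u - A := by
      have := hg haI huI hu.1
      rw [hA]; linarith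
    have hKfd : HasDerivAt Kf (K (g u - A)) (g u - A) := by
      rw [hKf]
      exact intervalIntegral.integral_hasDerivAt_right (hKi _ hpos)
        ⟨univ, univ_mem, hKm.aestronglyMeasurable.restrict⟩
        (hKc.continuousAt (Ioi_mem_nhds hpos))
    have hinner : HasDerivAt (fun y => g y - A) (deriv g u) u := (hgd u huI).sub_const A
    exact (HasDerivAt.comp u hKfd hinner).const_mul (f a)
  -- identify the derivative a.e.
  have hderiv_ae : ∀ᵐ u ∂(volume : Measure ℝ), u ∈ Ioc a x →
      deriv (fun y => ∫ v in a..y, K (g y - g v) * f v * deriv g v) u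
        = f a * (K (g u - A) * deriv g u) + q u := by
    filter_upwards [hae, hae_ne x] with u hu hune
    intro huIoc
    have hux : u < x := lt_of_le_of_ne huIoc.2 hune
    have huOoo : u ∈ Ioo a b := ⟨huIoc.1, lt_of_lt_of_le hux hxb⟩
    have hFnd : HasDerivAt Fn (f a * (K (g u - A) * deriv g u) + qt u) u := by
      rw [hFn]
      exact (hKf_deriv u huOoo).add hu
    have heq : (fun y => ∫ v in a..y, K (g y - g v) * f v * deriv g v) =ᶠ[nhds u] Fn :=
      eventually_of_mem (isOpen_Ioo.mem_nhds huOoo) (fun y hy => hFn_eq y hy)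
    rw [heq.deriv_eq, hFnd.deriv, hqt_eq u ⟨huIoc.1, (lt_of_lt_of_le hux hxb).le⟩]
  -- the final Fubini
  set ΦC : ℝ → ℝ → ℝ := fun u w => (P u * (M (X - G u) * K (G u - G w))) * f₁ w with hΦC
  have hΦCB : ∀ u, (fun w => ΦC u w) = fun w => M (X - G u) * ΦB u w := by
    intro u
    funext w
    simp only [hΦC, hΦB]
    ring
  have hmeasC : AEStronglyMeasurable
      (fun p : ℝ × ℝ => if p.2 ≤ p.1 then ΦC p.1 p.2 else 0)
      ((volume.restrict (Ioc a x)).prod (volume.restrict (Ioc a x))) := by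
    apply Measurable.aestronglyMeasurable
    apply Measurable.ite (measurableSet_le measurable_snd measurable_fst)
    · exact (((hPc.measurable.comp measurable_fst).mul
        ((hMm.comp (measurable_const.sub (hGc.measurable.comp measurable_fst))).mul
          (hKm.comp ((hGc.measurable.comp measurable_fst).sub
            (hGc.measurable.comp measurable_snd)))))).mul
        (hf₁c.measurable.comp measurable_snd)
    · exact measurable_const
  have hsectC : ∀ u ∈ Ioc a x, IntegrableOn (fun w => ΦC u w) (Ioc a u) := by
    intro u hu
    rw [hΦCB u]
    exact (hsectB u ⟨hu.1, hu.2.trans hxb⟩).const_mul _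
  have hbndC : IntegrableOn (fun u => |M (X - G u)| * (P u * (Cr * KA))) (Ioc a x) := by
    have e : (fun u => (P u * |M (X - G u)|) * (Cr * KA))
        = fun u => |M (X - G u)| * (P u * (Cr * KA)) := funext fun u => by ring
    exact e ▸ (HsubM.mul_const (Cr * KA))
  have hleC : ∀ u ∈ Ioc a x, (∫ w in Ioc a u, ‖ΦC u w‖)
      ≤ |M (X - G u)| * (P u * (Cr * KA)) := by
    intro u hu
    have e : (fun w => ‖ΦC u w‖) = fun w => |M (X - G u)| * ‖ΦB u w‖ := by
      funext w
      simp only [hΦC, hΦB, Real.norm_eq_abs, ← abs_mul]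
      congr 1
      ring
    rw [e, MeasureTheory.integral_const_mul]
    exact mul_le_mul_of_nonneg_left
      (hleB b hbI u ⟨hu.1, hu.2.trans hxb⟩) (abs_nonneg _)
  have hfubC := triangle_fubini hax.le ΦC hmeasC hsectC _ hbndC hleC
  -- final computation
  rw [intervalIntegral.integral_of_le hax.le]
  have hPieces : ∀ᵐ u ∂(volume : Measure ℝ), u ∈ Ioc a x →
      M (X - g u) * ((1 / deriv g u) *
          deriv (fun y => ∫ v in a..y, K (g y - g v) * f v * deriv g v) u) * deriv g u
        = (P u * (M (X - G u) * K (G u - g a))) * f a + ∫ w in Ioc a u, ΦC u w := by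
    filter_upwards [hderiv_ae, hae_ne x] with u hud hune
    intro huIoc
    have hux : u < x := lt_of_le_of_ne huIoc.2 hune
    have huI : u ∈ Icc a b := ⟨huIoc.1.le, hux.le.trans hxb⟩
    rw [hud huIoc]
    have hg0' : deriv g u ≠ 0 := (hgpos u huI).ne'
    have e2 : (∫ w in Ioc a u, ΦC u w) = M (X - G u) * q u := by
      rw [hΦCB u, MeasureTheory.integral_const_mul]
    rw [e2, hPeq u huI, hGeq u huI, hA]
    field_simp
  calc (∫ u in Ioc a x,
        M (X - g u) * ((1 / deriv g u) *
          deriv (fun y => ∫ v in a..y, K (g y - g v) * f v * deriv g v) u) * deriv g u)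
      = ∫ u in Ioc a x,
          ((P u * (M (X - G u) * K (G u - g a))) * f a + ∫ w in Ioc a u, ΦC u w) :=
        setIntegral_congr_ae measurableSet_Ioc hPieces
    _ = (∫ u in Ioc a x, (P u * (M (X - G u) * K (G u - g a))) * f a)
          + ∫ u in Ioc a x, ∫ w in Ioc a u, ΦC u w :=
        integral_add ((HMK a le_rfl hax).2.mul_const _) hfubC.2
    _ = f a + (f x - f a) := by
        congr 1
        · rw [MeasureTheory.integral_mul_const, (HMK a le_rfl hax).1, one_mul]
        · rw [hfubC.1]
          have eR : (∫ w in Ioc a x, ∫ u in Ioc w x, ΦC u w) = ∫ w in Ioc a x, f₁ w := by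
            apply setIntegral_congr_ae measurableSet_Ioc
            filter_upwards [hae_ne x] with w hwne hw
            have hwx : w < x := lt_of_le_of_ne hw.2 hwne
            have hwI : w ∈ Icc a b := ⟨hw.1.le, hwx.le.trans hxb⟩
            have e0 : (fun u => ΦC u w)
                = fun u => (P u * (M (X - G u) * K (G u - g w))) * f₁ w := by
              funext u
              simp only [hΦC]
              rw [hGeq w hwI]
            rw [e0, MeasureTheory.integral_mul_const, (HMK w hw.1.le hwx).1, one_mul]
          rw [eR]
          have := hFTC x hxI
          linarith
    _ = f x := by ring

lemma ae_ne_point (y : ℝ) : ∀ᵐ w : ℝ ∂(volume : Measure ℝ), w ≠ y := by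
  rw [ae_iff]
  have : {w : ℝ | ¬ w ≠ y} = {y} := by ext w; simp [not_not]
  rw [this, measure_singleton]

/-- Second fundamental theorem of parametric GFC for the RL-type parametric GFD:
`I_{a+,g}^{(M)} D_{a+,g}^{(K)} f = f`. -/
theorem second_FT_parametric_GFD_RL (M K : ℝ → ℝ)
    (hSonin : ∀ x : ℝ, 0 < x → (∫ z in (0 : ℝ)..x, M (x - z) * K z) = 1)
    (hMc : ContinuousOn M (Ioi 0)) (hKc : ContinuousOn K (Ioi 0))
    (hMi : ∀ T > 0, IntervalIntegrable M MeasureTheory.volume 0 T)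
    (hKi : ∀ T > 0, IntervalIntegrable K MeasureTheory.volume 0 T)
    (a b : ℝ) (hab : a < b) (g : ℝ → ℝ)
    (hg : StrictMonoOn g (Icc a b))
    (hgd : ∀ x ∈ Icc a b, HasDerivAt g (deriv g x) x)
    (hg' : ContinuousOn (deriv g) (Icc a b))
    (hg0 : ∀ x ∈ Icc a b, deriv g x ≠ 0)
    (f : ℝ → ℝ) (hf : ContDiffOn ℝ 1 f (Icc a b)) :
    ∀ x ∈ Ioc a b,
      (∫ u in a..x,
        M (g x - g u) *
          ((1 / deriv g u) *
            deriv (fun y => ∫ v in a..y, K (g y - g v) * f v * deriv g v) u) *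
          deriv g u)
        = f x := by
  classical
  set M' : ℝ → ℝ := fun t => if h : (0:ℝ) < t then M t else 0 with hM'
  set K' : ℝ → ℝ := fun t => if h : (0:ℝ) < t then K t else 0 with hK'
  have hM'eq : ∀ t : ℝ, 0 < t → M' t = M t := fun t ht => dif_pos ht
  have hK'eq : ∀ t : ℝ, 0 < t → K' t = K t := fun t ht => dif_pos ht
  have hM'm : Measurable M' := by
    apply Measurable.dite (f := fun t : {t : ℝ // 0 < t} => M t.1)
      (g := fun _ => (0:ℝ))
    · exact (hMc.restrict).measurable
    · exact measurable_const
    · exact measurableSet_Ioi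
  have hK'm : Measurable K' := by
    apply Measurable.dite (f := fun t : {t : ℝ // 0 < t} => K t.1)
      (g := fun _ => (0:ℝ))
    · exact (hKc.restrict).measurable
    · exact measurable_const
    · exact measurableSet_Ioi
  have hSonin' : ∀ c : ℝ, 0 < c → (∫ z in (0 : ℝ)..c, M' (c - z) * K' z) = 1 := by
    intro c hc
    rw [← hSonin c hc]
    apply intervalIntegral.integral_congr_ae
    filter_upwards [ae_ne_point c] with z hzne hz
    rw [uIoc_of_le hc.le] at hz
    have hz1 : 0 < z := hz.1
    have hz2 : 0 < c - z := by
      rcases lt_of_le_of_ne hz.2 hzne with h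
      linarith
    rw [hM'eq _ hz2, hK'eq _ hz1]
  have hMc' : ContinuousOn M' (Ioi 0) := hMc.congr (fun t ht => hM'eq t ht)
  have hKc' : ContinuousOn K' (Ioi 0) := hKc.congr (fun t ht => hK'eq t ht)
  have hMi' : ∀ T > 0, IntervalIntegrable M' volume 0 T := by
    intro T hT
    rw [intervalIntegrable_iff_integrableOn_Ioc_of_le hT.le]
    exact ((intervalIntegrable_iff_integrableOn_Ioc_of_le hT.le).1 (hMi T hT)).congr_fun
      (fun t ht => (hM'eq t ht.1).symm) measurableSet_Ioc
  have hKi' : ∀ T > 0, IntervalIntegrable K' volume 0 T := by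
    intro T hT
    rw [intervalIntegrable_iff_integrableOn_Ioc_of_le hT.le]
    exact ((intervalIntegrable_iff_integrableOn_Ioc_of_le hT.le).1 (hKi T hT)).congr_fun
      (fun t ht => (hK'eq t ht.1).symm) measurableSet_Ioc
  have main := aux_FT M' K' hM'm hK'm hSonin' hMc' hKc' hMi' hKi' a b hab g hg hgd hg' hg0 f hf
  intro x hx
  have hax : a < x := hx.1
  have hxb : x ≤ b := hx.2
  have hxI : x ∈ Icc a b := ⟨hax.le, hxb⟩
  -- the inner functions agree on Ioo a b
  have hInner : ∀ y ∈ Ioo a b,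
      (∫ v in a..y, K (g y - g v) * f v * deriv g v)
        = ∫ v in a..y, K' (g y - g v) * f v * deriv g v := by
    intro y hy
    apply intervalIntegral.integral_congr_ae
    filter_upwards [ae_ne_point y] with v hvne hv
    rw [uIoc_of_le hy.1.le] at hv
    have hvI : v ∈ Icc a b := ⟨hv.1.le, hv.2.trans hy.2.le⟩
    have hyI : y ∈ Icc a b := ⟨hy.1.le, hy.2.le⟩
    have hvy : v < y := lt_of_le_of_ne hv.2 hvne
    have hpos : 0 < g y - g v := by
      have := hg hvI hyI hvy
      linarith
    rw [hK'eq _ hpos]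
  rw [← main x hx]
  apply intervalIntegral.integral_congr_ae
  filter_upwards [ae_ne_point x] with u hune hu
  rw [uIoc_of_le hax.le] at hu
  have hux : u < x := lt_of_le_of_ne hu.2 hune
  have huOoo : u ∈ Ioo a b := ⟨hu.1, lt_of_lt_of_le hux hxb⟩
  have huI : u ∈ Icc a b := ⟨hu.1.le, (lt_of_lt_of_le hux hxb).le⟩
  have hMpos : 0 < g x - g u := by
    have := hg huI hxI hux
    linarith
  have hder : deriv (fun y => ∫ v in a..y, K (g y - g v) * f v * deriv g v) u
      = deriv (fun y => ∫ v in a..y, K' (g y - g v) * f v * deriv g v) u := by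
    apply Filter.EventuallyEq.deriv_eq
    exact eventually_of_mem (isOpen_Ioo.mem_nhds huOoo) (fun y hy => hInner y hy)
  rw [hM'eq _ hMpos, hder]
end
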